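/- arXiv:1501.02252 — 5 statements merged into one kernel-verified Lean document; each statement's English description precedes it below -/
import Mathlib

section
/- Let N be a positive integer, and let Φ = Σ_{p=1}^{2N} vec(A_p) vec(A_p)ᴴ ∈ ℂ^{N²×N²}, where A_p = a_p a_pᴴ. Then the matrix 2N²·I_{N²} − Φ is positive semidefinite; equivalently, zᴴΦz ≤ 2N²·‖z‖² for every z ∈ ℂ^{N²}. -/
open Matrix Finset ComplexOrder

noncomputable section

/-- The frequency `ω_p = 2π(p-1)/(2N)` (0-indexed: `ω_p = 2πp/(2N)`). -/
def omega (N : ℕ) (p : Fin (2 * N)) : ℝ := 2 * Real.pi * (p : ℕ) / (2 * N)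

/-- The Fourier vector `a_p ∈ ℂᴺ` with `n`-th entry `e^{i ω_p (n-1)}`
(0-indexed: entry `e^{i ω_p n}`). -/
def aVec (N : ℕ) (p : Fin (2 * N)) : Fin N → ℂ :=
  fun n => Complex.exp (Complex.I * (omega N p) * (n : ℕ))

/-- `vec(A_p)` where `A_p = a_p a_pᴴ`: the vectorization of `A_p`, indexed by
pairs `(m, n)` (the pair `(m, n)` corresponds to position `m + (n-1)N`),
so `vec(A_p)_{(m,n)} = (A_p)_{m,n} = a_p(m) · conj(a_p(n))`. -/
def vecAp (N : ℕ) (p : Fin (2 * N)) : Fin N × Fin N → ℂ :=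
  fun mn => aVec N p mn.1 * (starRingEnd ℂ) (aVec N p mn.2)

/-- `Φ = ∑_{p=1}^{2N} vec(A_p) vec(A_p)ᴴ ∈ ℂ^{N² × N²}`. -/
def Phi (N : ℕ) : Matrix (Fin N × Fin N) (Fin N × Fin N) ℂ :=
  ∑ p : Fin (2 * N), vecMulVec (vecAp N p) (star (vecAp N p))

lemma vec_term (N : ℕ) (hN : 0 < N) (p : Fin (2*N)) (x y : Fin N × Fin N) :
    vecAp N p x * (starRingEnd ℂ) (vecAp N p y)
      = Complex.exp (Complex.I * Real.pi * (((x.1:ℤ) - x.2) - ((y.1:ℤ) - y.2)) / N) ^ (p : ℕ) := by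
  rw [← Complex.exp_nat_mul]
  unfold vecAp aVec omega
  simp only [_root_.map_mul, ← Complex.exp_conj, _root_.map_mul, Complex.conj_I, Complex.conj_ofReal,
    Complex.conj_natCast, map_natCast, map_div₀, map_add, map_neg, map_ofNat, ← Complex.exp_add]
  congr 1
  have hN' : (N:ℂ) ≠ 0 := by exact_mod_cast hN.ne'
  push_cast
  field_simp
  ring

lemma phi_entry (N : ℕ) (hN : 0 < N) (x y : Fin N × Fin N) :
    Phi N x y = if ((x.1:ℤ) - x.2) = ((y.1:ℤ) - y.2) then (2*N : ℂ) else 0 := by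
  have hN' : (N:ℂ) ≠ 0 := by exact_mod_cast hN.ne'
  set k : ℤ := (((x.1:ℤ) - x.2) - ((y.1:ℤ) - y.2)) with hk
  have hPhi : Phi N x y = ∑ p : Fin (2*N),
      Complex.exp (Complex.I * Real.pi * (k:ℂ) / N) ^ (p : ℕ) := by
    unfold Phi
    rw [Matrix.sum_apply]
    refine Finset.sum_congr rfl fun p _ => ?_
    rw [vecMulVec_apply]
    simp only [Pi.star_apply, RCLike.star_def]
    rw [vec_term N hN p x y]
    rw [hk]
    push_cast
    ring_nf
  rw [hPhi, Fin.sum_univ_eq_sum_range (fun i => _ ^ i) (2*N)]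
  by_cases hkz : ((x.1:ℤ) - x.2) = ((y.1:ℤ) - y.2)
  · have : k = 0 := by omega
    simp [this, hkz]
  · have hk0 : k ≠ 0 := by omega
    have hkb : k < 2*N ∧ -(2*(N:ℤ)) < k := by
      have := x.1.isLt; have := x.2.isLt; have := y.1.isLt; have := y.2.isLt
      omega
    set ζ : ℂ := Complex.exp (Complex.I * Real.pi * (k:ℂ) / N) with hζ
    have hζ1 : ζ ≠ 1 := by
      rw [hζ, Ne, Complex.exp_eq_one_iff]
      rintro ⟨n, hn⟩
      have hπ : (Real.pi : ℂ) ≠ 0 := by exact_mod_cast Real.pi_ne_zero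
      have hkc : (k:ℂ) = 2*n*N := by
        field_simp at hn
        apply mul_left_cancel₀ (mul_ne_zero Complex.I_ne_zero hπ)
        linear_combination (Complex.I * Real.pi) * hn
      have hkz2 : k = 2*n*N := by exact_mod_cast hkc
      rcases lt_trichotomy n 0 with h | h | h
      · nlinarith [hkb.2]
      · rw [h] at hkz2; simp at hkz2; exact hk0 hkz2
      · nlinarith [hkb.1]
    have hζ2N : ζ ^ (2*N) = 1 := by
      rw [hζ, ← Complex.exp_nat_mul]
      have : (2*N : ℕ) * (Complex.I * Real.pi * (k:ℂ) / N) = (k:ℂ) * (2 * Real.pi * Complex.I) := by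
        push_cast; field_simp
      rw [this]
      exact_mod_cast Complex.exp_int_mul_two_pi_mul_I k
    rw [geom_sum_eq hζ1, hζ2N]
    simp [hkz]

/-- the difference function -/
def fdiff (N : ℕ) (x : Fin N × Fin N) : ℤ := (x.1 : ℤ) - (x.2 : ℤ)

lemma fdiff_mem {N : ℕ} (x : Fin N × Fin N) : fdiff N x ∈ Finset.Icc (-(N:ℤ)) N := by
  have := x.1.isLt; have := x.2.isLt
  simp only [Finset.mem_Icc, fdiff]; omega

lemma quad_eq {N : ℕ} (hN : 0 < N) (z : Fin N × Fin N → ℂ) :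
    star z ⬝ᵥ Phi N *ᵥ z = (2*N : ℂ) *
      ((∑ d ∈ Finset.Icc (-(N:ℤ)) N,
        Complex.normSq (∑ x : Fin N × Fin N, if fdiff N x = d then z x else 0) : ℝ) : ℂ) := by
  have key : ∀ x y : Fin N × Fin N,
      ∑ d ∈ Finset.Icc (-(N:ℤ)) N,
        (if fdiff N x = d then (starRingEnd ℂ) (z x) else 0) * (if fdiff N y = d then z y else 0)
      = if fdiff N x = fdiff N y then (starRingEnd ℂ) (z x) * z y else 0 := by
    intro x y
    rw [Finset.sum_eq_single (fdiff N x)]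
    · by_cases h : fdiff N x = fdiff N y <;> simp [h, eq_comm]
    · intro d _ hd; simp [Ne.symm hd]
    · intro h; exact absurd (fdiff_mem x) h
  have expand : ∀ d : ℤ,
      (Complex.normSq (∑ x : Fin N × Fin N, if fdiff N x = d then z x else 0) : ℂ)
      = ∑ x : Fin N × Fin N, ∑ y : Fin N × Fin N,
          (if fdiff N x = d then (starRingEnd ℂ) (z x) else 0) *
            (if fdiff N y = d then z y else 0) := by
    intro d
    rw [show (Complex.normSq (∑ x : Fin N × Fin N, if fdiff N x = d then z x else 0) : ℂ)
        = (starRingEnd ℂ) (∑ x : Fin N × Fin N, if fdiff N x = d then z x else 0) *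
          (∑ x : Fin N × Fin N, if fdiff N x = d then z x else 0) by
      rw [mul_comm, Complex.mul_conj]]
    rw [map_sum, Finset.sum_mul]
    refine Finset.sum_congr rfl fun x _ => ?_
    rw [Finset.mul_sum]
    refine Finset.sum_congr rfl fun y _ => ?_
    by_cases h : fdiff N x = d <;> simp [h]
  calc star z ⬝ᵥ Phi N *ᵥ z
      = ∑ x : Fin N × Fin N, ∑ y : Fin N × Fin N,
          (starRingEnd ℂ) (z x) * (Phi N x y * z y) := by
        simp [dotProduct, mulVec, Finset.mul_sum, RCLike.star_def]
    _ = ∑ x : Fin N × Fin N, ∑ y : Fin N × Fin N,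
          (2*N : ℂ) * (if fdiff N x = fdiff N y then (starRingEnd ℂ) (z x) * z y else 0) := by
        refine Finset.sum_congr rfl fun x _ => Finset.sum_congr rfl fun y _ => ?_
        rw [phi_entry N hN x y]
        show _ = (2*(N:ℂ)) * (if fdiff N x = fdiff N y then _ else 0)
        unfold fdiff
        by_cases h : (x.1:ℤ) - x.2 = (y.1:ℤ) - y.2 <;> simp [h] <;> ring
    _ = (2*N : ℂ) * ∑ x : Fin N × Fin N, ∑ y : Fin N × Fin N,
          (if fdiff N x = fdiff N y then (starRingEnd ℂ) (z x) * z y else 0) := by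
        rw [Finset.mul_sum]
        exact Finset.sum_congr rfl fun x _ => by rw [Finset.mul_sum]
    _ = (2*N : ℂ) * ((∑ d ∈ Finset.Icc (-(N:ℤ)) N,
          Complex.normSq (∑ x : Fin N × Fin N, if fdiff N x = d then z x else 0) : ℝ) : ℂ) := by
        rw [Complex.ofReal_sum]
        congr 1
        refine Eq.symm ?_
        calc ∑ d ∈ Finset.Icc (-(N:ℤ)) N,
              (Complex.normSq (∑ x : Fin N × Fin N, if fdiff N x = d then z x else 0) : ℂ)
            = ∑ d ∈ Finset.Icc (-(N:ℤ)) N, ∑ x : Fin N × Fin N, ∑ y : Fin N × Fin N,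
                (if fdiff N x = d then (starRingEnd ℂ) (z x) else 0) *
                  (if fdiff N y = d then z y else 0) :=
              Finset.sum_congr rfl fun d _ => expand d
          _ = ∑ x : Fin N × Fin N, ∑ d ∈ Finset.Icc (-(N:ℤ)) N, ∑ y : Fin N × Fin N,
                (if fdiff N x = d then (starRingEnd ℂ) (z x) else 0) *
                  (if fdiff N y = d then z y else 0) := Finset.sum_comm
          _ = ∑ x : Fin N × Fin N, ∑ y : Fin N × Fin N,
                (if fdiff N x = fdiff N y then (starRingEnd ℂ) (z x) * z y else 0) := by
              refine Finset.sum_congr rfl fun x _ => ?_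
              rw [Finset.sum_comm]
              exact Finset.sum_congr rfl fun y _ => key x y

lemma normSq_S_le {N : ℕ} (z : Fin N × Fin N → ℂ) (d : ℤ) :
    Complex.normSq (∑ x : Fin N × Fin N, if fdiff N x = d then z x else 0)
      ≤ N * ∑ x : Fin N × Fin N, if fdiff N x = d then Complex.normSq (z x) else 0 := by
  classical
  set t := Finset.univ.filter (fun x : Fin N × Fin N => fdiff N x = d) with ht
  have h1 : (∑ x : Fin N × Fin N, if fdiff N x = d then z x else 0) = ∑ x ∈ t, z x :=
    (Finset.sum_filter _ _).symm
  have hcard : (t.card : ℝ) ≤ N := by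
    have h2 : t.card ≤ (Finset.univ : Finset (Fin N)).card := by
      apply Finset.card_le_card_of_injOn (fun x => x.1) (fun x _ => Finset.mem_univ _)
      intro a ha b hb hab
      simp only [ht, Finset.mem_coe, Finset.mem_filter, Finset.mem_univ, true_and, fdiff] at ha hb
      have h1' : (a.1 : ℤ) = b.1 := by exact_mod_cast congrArg (fun x : Fin N => (x : ℤ)) hab
      have h2' : a.2 = b.2 := by
        have : (a.2 : ℤ) = b.2 := by have := (Finset.mem_filter.mp ha).2; have := (Finset.mem_filter.mp hb).2; omega
        exact Fin.ext (by exact_mod_cast this)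
      exact Prod.ext hab h2'
    simpa using (Nat.cast_le (α := ℝ)).mpr h2
  rw [h1]
  calc Complex.normSq (∑ x ∈ t, z x) = ‖∑ x ∈ t, z x‖ ^ 2 := (Complex.sq_norm _).symm
    _ ≤ (∑ x ∈ t, ‖z x‖) ^ 2 := by
        apply pow_le_pow_left₀ (norm_nonneg _) (norm_sum_le t z)
    _ ≤ t.card * ∑ x ∈ t, ‖z x‖ ^ 2 := sq_sum_le_card_mul_sum_sq
    _ ≤ N * ∑ x ∈ t, ‖z x‖ ^ 2 := by
        apply mul_le_mul_of_nonneg_right hcard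
        exact Finset.sum_nonneg fun x _ => sq_nonneg _
    _ = N * ∑ x : Fin N × Fin N, if fdiff N x = d then Complex.normSq (z x) else 0 := by
        rw [Finset.sum_filter]
        simp [Complex.sq_norm]

lemma sum_T_le {N : ℕ} (z : Fin N × Fin N → ℂ) :
    ∑ d ∈ Finset.Icc (-(N:ℤ)) N,
        Complex.normSq (∑ x : Fin N × Fin N, if fdiff N x = d then z x else 0)
      ≤ N * ∑ x : Fin N × Fin N, Complex.normSq (z x) := by
  calc ∑ d ∈ Finset.Icc (-(N:ℤ)) N,
        Complex.normSq (∑ x : Fin N × Fin N, if fdiff N x = d then z x else 0)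
      ≤ ∑ d ∈ Finset.Icc (-(N:ℤ)) N,
          (N : ℝ) * ∑ x : Fin N × Fin N, if fdiff N x = d then Complex.normSq (z x) else 0 :=
        Finset.sum_le_sum fun d _ => normSq_S_le z d
    _ = N * ∑ x : Fin N × Fin N, Complex.normSq (z x) := by
        rw [← Finset.mul_sum]
        congr 1
        rw [Finset.sum_comm]
        refine Finset.sum_congr rfl fun x _ => ?_
        rw [Finset.sum_ite_eq]
        simp [fdiff_mem x]

lemma phi_herm {N : ℕ} (hN : 0 < N) : (Phi N).IsHermitian := by
  ext i j
  rw [conjTranspose_apply, phi_entry N hN j i, phi_entry N hN i j]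
  by_cases h : (i.1:ℤ) - i.2 = (j.1:ℤ) - j.2
  · rw [if_pos h.symm, if_pos h]
    simp
  · have h' : ¬((j.1:ℤ) - j.2 = (i.1:ℤ) - i.2) := fun hh => h hh.symm
    rw [if_neg h', if_neg h]
    simp

lemma star_dot_self {N : ℕ} (z : Fin N × Fin N → ℂ) :
    star z ⬝ᵥ z = ((∑ x : Fin N × Fin N, Complex.normSq (z x) : ℝ) : ℂ) := by
  simp only [dotProduct, Pi.star_apply, RCLike.star_def]
  push_cast
  refine Finset.sum_congr rfl fun x _ => ?_
  rw [mul_comm, Complex.mul_conj]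

/-- `2N² I_{N²} − Φ` is positive semidefinite; equivalently
`zᴴ Φ z ≤ 2N² ‖z‖² ` for every `z ∈ ℂ^{N²}`. -/
theorem Phi_le_two_N_sq_smul_one (N : ℕ) (hN : 0 < N) :
    ((2 * (N : ℂ) ^ 2) • (1 : Matrix (Fin N × Fin N) (Fin N × Fin N) ℂ) - Phi N).PosSemidef ∧
    ∀ z : Fin N × Fin N → ℂ,
      (star z ⬝ᵥ Phi N *ᵥ z).re ≤ 2 * (N : ℝ) ^ 2 * ∑ i, ‖z i‖ ^ 2 := by
  constructor
  · rw [Matrix.posSemidef_iff_dotProduct_mulVec]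
    constructor
    · apply IsHermitian.sub ?_ (phi_herm hN)
      ext i j
      simp only [conjTranspose_apply, Matrix.smul_apply, Matrix.one_apply, smul_eq_mul]
      by_cases h : j = i
      · subst h; simp
      · have h' : ¬(i = j) := fun hh => h hh.symm
        simp [h, h']
    · intro z
      rw [Matrix.sub_mulVec, dotProduct_sub, smul_mulVec, one_mulVec,
        dotProduct_smul, quad_eq hN z, star_dot_self]
      set T := ∑ d ∈ Finset.Icc (-(N:ℤ)) N,
        Complex.normSq (∑ x : Fin N × Fin N, if fdiff N x = d then z x else 0) with hT
      set A := ∑ x : Fin N × Fin N, Complex.normSq (z x) with hA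
      have hTA := sum_T_le z
      rw [← hT, ← hA] at hTA
      have hAnn : 0 ≤ A := Finset.sum_nonneg fun x _ => Complex.normSq_nonneg _
      have heq : (2 * (N:ℂ)^2) • ((A : ℝ) : ℂ) - (2*N : ℂ) * ((T : ℝ) : ℂ)
          = ((2 * (N:ℝ)^2 * A - 2*N*T : ℝ) : ℂ) := by
        rw [smul_eq_mul]
        push_cast
        ring
      rw [heq]
      rw [Complex.zero_le_real]
      have hNR : (0:ℝ) ≤ N := Nat.cast_nonneg N
      nlinarith [hTA, hNR]
  · intro z
    rw [quad_eq hN z]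
    set T := ∑ d ∈ Finset.Icc (-(N:ℤ)) N,
      Complex.normSq (∑ x : Fin N × Fin N, if fdiff N x = d then z x else 0) with hT
    have habs : ∑ i : Fin N × Fin N, ‖z i‖ ^ 2
        = ∑ x : Fin N × Fin N, Complex.normSq (z x) := by
      simp [Complex.sq_norm]
    rw [habs]
    have heq : (2*(N:ℂ)) * ((T : ℝ) : ℂ) = ((2*N*T : ℝ) : ℂ) := by push_cast; ring
    rw [heq, Complex.ofReal_re]
    have hTA := sum_T_le z
    rw [← hT] at hTA
    have hNR : (0:ℝ) ≤ N := Nat.cast_nonneg N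
    nlinarith [hTA, hNR]
end
end

section
/- Let N be a positive integer, and let Φ = Σ_{p=1}^{2N} vec(A_p) vec(A_p)ᴴ ∈ ℂ^{N²×N²}, where A_p = a_p a_pᴴ. Then vec(I_N) is an eigenvector of Φ with eigenvalue 2N²; that is, Φ·vec(I_N) = 2N²·vec(I_N). Consequently (together with Φ ⪯ 2N²·I) the maximum eigenvalue of Φ equals 2N². -/
open Matrix Finset ComplexOrder

noncomputable section

lemma conj_exp_helper (r : ℝ) (c : ℕ) :
    (starRingEnd ℂ) (Complex.exp (Complex.I * (r : ℂ) * (c : ℕ)))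
      = Complex.exp (-(Complex.I * (r : ℂ) * (c : ℕ))) := by
  rw [← Complex.exp_conj]
  congr 1
  simp only [_root_.map_mul, Complex.conj_I, Complex.conj_ofReal, Complex.conj_natCast]
  ring

lemma aVec_mul_conj_self (N : ℕ) (p : Fin (2 * N)) (n : Fin N) :
    aVec N p n * (starRingEnd ℂ) (aVec N p n) = 1 := by
  rw [aVec, conj_exp_helper, ← Complex.exp_add, add_neg_cancel, Complex.exp_zero]

lemma key_sum (N : ℕ) (hN : 0 < N) (m n : Fin N) :
    ∑ p : Fin (2 * N), aVec N p m * (starRingEnd ℂ) (aVec N p n)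
      = if m = n then (2 * N : ℂ) else 0 := by
  have h2N : (2 * (N : ℂ)) ≠ 0 := by
    simp only [ne_eq, mul_eq_zero, OfNat.ofNat_ne_zero, Nat.cast_eq_zero, false_or]
    omega
  set k : ℤ := (m : ℤ) - (n : ℤ) with hk
  set ζ : ℂ := Complex.exp (2 * Real.pi * Complex.I * k / (2 * N)) with hζ
  have hterm : ∀ p : Fin (2 * N),
      aVec N p m * (starRingEnd ℂ) (aVec N p n) = ζ ^ (p : ℕ) := by
    intro p
    rw [hζ, ← Complex.exp_nat_mul, aVec, aVec, conj_exp_helper, ← Complex.exp_add]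
    congr 1
    simp only [omega, hk]
    push_cast
    field_simp
    ring
  simp only [hterm]
  rw [Fin.sum_univ_eq_sum_range (fun i => ζ ^ i)]
  by_cases hmn : m = n
  · have hz : ζ = 1 := by
      rw [hζ, hk, hmn]
      simp
    simp [hz, hmn]
  · have hkne : k ≠ 0 := by
      simp only [hk, sub_ne_zero]
      exact_mod_cast fun h => hmn (Fin.ext (by exact_mod_cast h))
    have hπI : (2 * (Real.pi : ℂ) * Complex.I) ≠ 0 := by
      simp [Real.pi_ne_zero, Complex.I_ne_zero]
    have hζne : ζ ≠ 1 := by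
      rw [hζ, Ne, Complex.exp_eq_one_iff]
      rintro ⟨j, hj⟩
      have hj' : 2 * (Real.pi : ℂ) * Complex.I * k = j * (2 * Real.pi * Complex.I) * (2 * N) :=
        (div_eq_iff h2N).mp hj
      have hC : (k : ℂ) = (2 * (N : ℂ)) * j :=
        mul_left_cancel₀ hπI (by linear_combination hj')
      have hkZ : k = (2 * (N : ℤ)) * j := by exact_mod_cast hC
      have hlt : |k| < 2 * (N : ℤ) := by
        have hm := m.2; have hn := n.2
        rw [hk, abs_lt]
        constructor <;> [skip; skip] <;> omega
      rcases eq_or_ne j 0 with rfl | hj0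
      · simp at hkZ; exact hkne hkZ
      · have h1 : (1 : ℤ) ≤ |j| := Int.one_le_abs hj0
        have habs : |k| = 2 * (N : ℤ) * |j| := by
          rw [hkZ, abs_mul, abs_of_nonneg (by positivity : (0:ℤ) ≤ 2 * (N:ℤ))]
        nlinarith [hlt, h1, habs]
    have hζpow : ζ ^ (2 * N) = 1 := by
      rw [hζ, ← Complex.exp_nat_mul]
      have heq : ((2 * N : ℕ) : ℂ) * (2 * Real.pi * Complex.I * k / (2 * N))
          = k * (2 * Real.pi * Complex.I) := by
        rw [hk]
        push_cast
        field_simp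
      rw [heq]
      exact_mod_cast Complex.exp_int_mul_two_pi_mul_I k
    rw [geom_sum_eq hζne, hζpow]
    simp [hmn]


/-- `vec(I_N)` is an eigenvector of `Φ` with eigenvalue `2N²`:
`Φ · vec(I_N) = 2N² · vec(I_N)`. -/
theorem Phi_mulVec_vec_one (N : ℕ) (hN : 0 < N) :
    Phi N *ᵥ (fun mn : Fin N × Fin N => (1 : Matrix (Fin N) (Fin N) ℂ) mn.1 mn.2)
      = (2 * (N : ℂ) ^ 2) • (fun mn : Fin N × Fin N => (1 : Matrix (Fin N) (Fin N) ℂ) mn.1 mn.2) := by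
  have hdot : ∀ p : Fin (2 * N),
      ∑ kl : Fin N × Fin N, star (vecAp N p) kl
        * (1 : Matrix (Fin N) (Fin N) ℂ) kl.1 kl.2 = (N : ℂ) := by
    intro p
    have hs : ∀ k : Fin N, star (vecAp N p) (k, k) = 1 := by
      intro k
      have h1 : vecAp N p (k, k) = 1 := aVec_mul_conj_self N p k
      simp [h1]
    have hs' : ∀ k : Fin N, (starRingEnd ℂ) (vecAp N p (k, k)) = 1 := by
      intro k
      have := hs k
      simpa using this
    simp only [Fintype.sum_prod_type, Matrix.one_apply, mul_ite, mul_one, mul_zero,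
      Finset.sum_ite_eq', Finset.sum_ite_eq, Finset.mem_univ, if_true]
    simp [hs, hs']
  funext mn
  have hmv : (Phi N *ᵥ (fun mn : Fin N × Fin N =>
      (1 : Matrix (Fin N) (Fin N) ℂ) mn.1 mn.2)) mn
      = ∑ p : Fin (2 * N), vecAp N p mn * (N : ℂ) := by
    rw [Phi, mulVec]
    simp only [dotProduct, Matrix.sum_apply, vecMulVec_apply, Finset.sum_mul]
    rw [Finset.sum_comm]
    refine Finset.sum_congr rfl fun p _ => ?_
    simp only [mul_assoc, ← Finset.mul_sum]
    rw [hdot p]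
  rw [hmv, ← Finset.sum_mul]
  simp only [vecAp]
  rw [key_sum N hN mn.1 mn.2]
  simp only [Pi.smul_apply, smul_eq_mul, Matrix.one_apply]
  by_cases h : mn.1 = mn.2 <;> simp [h] <;> ring
end
end

section
/- Let N be a positive integer and let Φ = Σ_{p=1}^{2N} vec(A_p) vec(A_p)ᴴ ∈ ℂ^{N²×N²}, where A_p = a_p a_pᴴ. Then for all indices m₁, n₁, m₂, n₂ ∈ {1,…,N}, the entry of Φ in row m₁+(n₁−1)N and column m₂+(n₂−1)N equals 2N if m₁ − m₂ = n₁ − n₂, and equals 0 otherwise. In particular Φ is a real matrix. -/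
open Matrix Finset ComplexOrder

noncomputable section

lemma key (N : ℕ) (hN : 0 < N) (m₁ n₁ m₂ n₂ : Fin N) :
    Phi N (m₁, n₁) (m₂, n₂)
      = if ((m₁ : ℤ) - (m₂ : ℤ) = (n₁ : ℤ) - (n₂ : ℤ)) then (2 * (N : ℂ)) else 0 := by
  set k : ℤ := ((m₁ : ℤ) - (m₂ : ℤ)) - ((n₁ : ℤ) - (n₂ : ℤ)) with hk
  set z : ℂ := Complex.exp (Complex.I * Real.pi * k / N) with hz
  have hNC : (N : ℂ) ≠ 0 := by
    exact_mod_cast Nat.cast_ne_zero.mpr hN.ne'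
  have hterm : ∀ p : Fin (2 * N),
      vecAp N p (m₁, n₁) * (starRingEnd ℂ) (vecAp N p (m₂, n₂)) = z ^ (p : ℕ) := by
    intro p
    rw [hz, ← Complex.exp_nat_mul]
    simp only [vecAp, aVec, _root_.map_mul, ← Complex.exp_conj, ← Complex.exp_add, map_add, map_neg,
      Complex.conj_I, Complex.conj_ofReal, Complex.conj_natCast]
    congr 1
    simp only [hk, omega]
    push_cast
    field_simp
    ring
  have hPhi : Phi N (m₁, n₁) (m₂, n₂) = ∑ i ∈ Finset.range (2 * N), z ^ i := by
    rw [Phi, Matrix.sum_apply]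
    rw [← Fin.sum_univ_eq_sum_range (fun i => z ^ i)]
    refine Finset.sum_congr rfl fun p _ => ?_
    rw [vecMulVec_apply, Pi.star_apply, ← hterm p]
    rfl
  by_cases hcond : (m₁ : ℤ) - (m₂ : ℤ) = (n₁ : ℤ) - (n₂ : ℤ)
  · have hk0 : k = 0 := by omega
    have hz1 : z = 1 := by rw [hz, hk0]; push_cast; simp
    rw [hPhi, hz1, if_pos hcond]
    simp [mul_comm]
  · rw [if_neg hcond]
    have hk0 : k ≠ 0 := by omega
    have hπ : (Real.pi : ℂ) ≠ 0 := by exact_mod_cast Real.pi_ne_zero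
    have hz1 : z ≠ 1 := by
      intro h
      rw [hz, Complex.exp_eq_one_iff] at h
      obtain ⟨m, hm⟩ := h
      have h3 : (Real.pi : ℂ) * Complex.I * k = (Real.pi : ℂ) * Complex.I * (2 * m * N) := by
        field_simp at hm
        linear_combination (Real.pi : ℂ) * Complex.I * hm
      have h4 : (k : ℂ) = ((2 * N * m : ℤ) : ℂ) := by
        have := mul_left_cancel₀ (mul_ne_zero hπ Complex.I_ne_zero) h3
        push_cast
        rw [this]; ring
      have h5 : k = 2 * N * m := by exact_mod_cast h4
      have b1 := m₁.isLt
      have b2 := n₁.isLt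
      have b3 := m₂.isLt
      have b4 := n₂.isLt
      have hbound : |k| < 2 * N := by
        rw [abs_lt]; omega
      have habs : |k| = 2 * N * |m| := by
        rw [h5, abs_mul]
        simp [abs_of_nonneg]
      have hm0 : m = 0 := by
        rcases eq_or_ne m 0 with h | h
        · exact h
        · exfalso
          have : (1 : ℤ) ≤ |m| := Int.one_le_abs (by simpa using h)
          nlinarith [abs_nonneg k]
      rw [hm0] at h5
      simp at h5
      omega
    have hzN : z ^ (2 * N) = 1 := by
      rw [hz, ← Complex.exp_nat_mul]
      have : (2 * N : ℕ) * (Complex.I * Real.pi * k / N) = k * (2 * Real.pi * Complex.I) := by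
        push_cast
        field_simp
      rw [this]
      exact Complex.exp_int_mul_two_pi_mul_I k
    rw [hPhi, geom_sum_eq hz1, hzN]
    simp

/-- The entry of `Φ` in row `(m₁, n₁)` (i.e. `m₁ + (n₁-1)N`) and
column `(m₂, n₂)` (i.e. `m₂ + (n₂-1)N`) equals `2N` if `m₁ − m₂ = n₁ − n₂`
and `0` otherwise. In particular `Φ` is a real matrix. -/
theorem Phi_entries (N : ℕ) (hN : 0 < N) :
    (∀ m₁ n₁ m₂ n₂ : Fin N,
      Phi N (m₁, n₁) (m₂, n₂)
        = if ((m₁ : ℤ) - (m₂ : ℤ) = (n₁ : ℤ) - (n₂ : ℤ)) then (2 * (N : ℂ)) else 0) ∧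
    (∀ i j : Fin N × Fin N, (Phi N i j).im = 0) := by
  refine ⟨key N hN, fun i j => ?_⟩
  rw [show i = (i.1, i.2) by rfl, show j = (j.1, j.2) by rfl, key N hN]
  split <;> simp
end
end

section
/- Let x ∈ ℂᴺ be unimodular, i.e., |xₙ| = 1 for n = 1,…,N, and let r_k = Σ_{n=1}^{N−k} xₙ·conj(x_{n+k}) for k = 0,…,N−1 be its aperiodic autocorrelations. Then the integrated sidelobe level admits the frequency-domain expression Σ_{k=1}^{N−1} |r_k|² = (1/(4N)) · Σ_{p=1}^{2N} ( |Σ_{n=1}^{N} xₙ e^{−iω_p(n−1)}|² − N )², where ω_p = 2π(p−1)/(2N) for p = 1,…,2N. -/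
open Finset

noncomputable section

lemma tri {M : Type*} [AddCommMonoid M] (N : ℕ) (h : ℕ → ℕ → M) :
    ∑ n ∈ range N, ∑ m ∈ range n, h n m
      = ∑ k ∈ range (N - 1), ∑ j ∈ range (N - (k + 1)), h (j + (k + 1)) j := by
  rw [Finset.sum_sigma', Finset.sum_sigma']
  refine Finset.sum_nbij' (fun q => ⟨q.1 - q.2 - 1, q.2⟩)
    (fun q => ⟨q.2 + (q.1 + 1), q.2⟩) ?_ ?_ ?_ ?_ ?_
  · rintro ⟨a, b⟩ hq
    simp only [Finset.mem_sigma, Finset.mem_range] at *; omega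
  · rintro ⟨a, b⟩ hq
    simp only [Finset.mem_sigma, Finset.mem_range] at *; omega
  · rintro ⟨a, b⟩ hq
    simp only [Finset.mem_sigma, Finset.mem_range] at hq
    have : b + (a - b - 1 + 1) = a := by omega
    simp [this]
  · rintro ⟨a, b⟩ hq
    simp only [Finset.mem_sigma, Finset.mem_range] at hq
    have : b + (a + 1) - b - 1 = a := by omega
    simp [this]
  · rintro ⟨a, b⟩ hq
    simp only [Finset.mem_sigma, Finset.mem_range] at hq
    have : b + (a - b - 1 + 1) = a := by omega
    simp [this]

lemma square_decomp {M : Type*} [AddCommMonoid M] (N : ℕ) (h : ℕ → ℕ → M) :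
    ∑ n ∈ range N, ∑ m ∈ range N, h n m
      = (∑ n ∈ range N, h n n)
        + ∑ k ∈ range (N - 1), ∑ j ∈ range (N - (k + 1)),
            (h j (j + (k + 1)) + h (j + (k + 1)) j) := by
  have key : ∀ n ∈ range N, ∑ m ∈ range N, h n m
      = h n n + (∑ m ∈ range n, h n m + ∑ m ∈ Ico (n + 1) N, h n m) := by
    intro n hn
    rw [Finset.mem_range] at hn
    rw [Finset.range_eq_Ico, ← Finset.sum_Ico_consecutive _ (Nat.zero_le (n+1)) hn,
      ← Finset.range_eq_Ico, Finset.sum_range_succ]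
    abel
  rw [Finset.sum_congr rfl key, Finset.sum_add_distrib, Finset.sum_add_distrib]
  have upper : ∑ n ∈ range N, ∑ m ∈ Ico (n + 1) N, h n m
      = ∑ m ∈ range N, ∑ n ∈ range m, h n m := by
    refine Finset.sum_comm' ?_
    intro a b
    simp only [Finset.mem_range, Finset.mem_Ico]
    omega
  rw [upper]
  have t1 := tri N h
  have t2 := tri N (fun a b => h b a)
  rw [t1, t2, ← Finset.sum_add_distrib]
  congr 1
  refine Finset.sum_congr rfl fun k _ => ?_
  rw [← Finset.sum_add_distrib]
  exact Finset.sum_congr rfl fun j _ => add_comm _ _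

lemma sum_root (N : ℕ) (hN : 0 < N) (d : ℤ) :
    ∑ p ∈ Finset.range (2 * N),
        Complex.exp (-(Complex.I * (2 * (Real.pi : ℂ) / (2 * (N : ℂ))) * ((p : ℕ) * d : ℤ)))
      = if (2 * (N : ℤ)) ∣ d then (2 * (N : ℕ) : ℂ) else 0 := by
  have hN2 : ((2 * N : ℕ) : ℂ) ≠ 0 := Nat.cast_ne_zero.mpr (by omega)
  set z := Complex.exp (-(Complex.I * (2 * (Real.pi : ℂ) / (2 * (N : ℂ))) * (d : ℂ))) with hz
  have hterm : ∀ p : ℕ,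
      Complex.exp (-(Complex.I * (2 * (Real.pi : ℂ) / (2 * (N : ℂ))) * ((p : ℕ) * d : ℤ)))
        = z ^ p := by
    intro p
    rw [hz, ← Complex.exp_nat_mul]
    congr 1
    push_cast
    ring
  have hzpow : z ^ (2 * N) = 1 := by
    rw [hz, ← Complex.exp_nat_mul]
    have harg : ((2 * N : ℕ) : ℂ) * -(Complex.I * (2 * (Real.pi : ℂ) / (2 * (N : ℂ))) * (d : ℂ))
        = ((-d : ℤ) : ℂ) * (2 * (Real.pi : ℂ) * Complex.I) := by
      have hne : (2 * (N : ℂ)) ≠ 0 := by push_cast at hN2 ⊢; exact_mod_cast hN2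
      have hinv : (2 * (N : ℂ)) * (2 * (N : ℂ))⁻¹ = 1 := mul_inv_cancel₀ hne
      push_cast
      linear_combination (-(2 * (Real.pi : ℂ) * Complex.I * (d : ℂ))) * hinv
    rw [harg, Complex.exp_int_mul_two_pi_mul_I]
  have hz1 : z = 1 ↔ (2 * (N : ℤ)) ∣ d := by
    rw [hz, Complex.exp_eq_one_iff]
    constructor
    · rintro ⟨n, hn⟩
      have hπ : (Real.pi : ℂ) ≠ 0 := by
        exact_mod_cast Complex.ofReal_ne_zero.mpr Real.pi_ne_zero
      have hNc : ((N : ℂ)) ≠ 0 := by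
        exact_mod_cast Nat.cast_ne_zero.mpr hN.ne'
      have hI : Complex.I ≠ 0 := Complex.I_ne_zero
      field_simp at hn
      have h2 : ((d : ℂ) - ((-(2 * (N : ℤ) * n) : ℤ) : ℂ)) * (2 * (Real.pi : ℂ) * Complex.I) = 0 := by
        push_cast
        linear_combination (-(2 * (Real.pi : ℂ) * Complex.I)) * hn
      have h3 : (2 * (Real.pi : ℂ) * Complex.I) ≠ 0 := by
        simp [hπ, hI]
      have h4 : (d : ℂ) = ((-(2 * (N : ℤ) * n) : ℤ) : ℂ) := by
        have := mul_eq_zero.mp h2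
        rcases this with h | h
        · exact sub_eq_zero.mp h
        · exact absurd h h3
      have hd : d = -(2 * (N : ℤ) * n) := by exact_mod_cast h4
      exact ⟨-n, by rw [hd]; ring⟩
    · rintro ⟨e, he⟩
      refine ⟨-e, ?_⟩
      rw [he]
      have hne : (2 * (N : ℂ)) ≠ 0 := by push_cast at hN2 ⊢; exact_mod_cast hN2
      push_cast
      field_simp
      rw [mul_comm (N : ℂ) (e : ℂ), mul_div_cancel_right₀ _ (Nat.cast_ne_zero.mpr hN.ne' : (N : ℂ) ≠ 0)]
  simp only [hterm]
  by_cases hdvd : (2 * (N : ℤ)) ∣ d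
  · rw [if_pos hdvd]
    have : z = 1 := hz1.mpr hdvd
    simp [this]
  · rw [if_neg hdvd]
    have hzne : z ≠ 1 := fun h => hdvd (hz1.mp h)
    rw [geom_sum_eq hzne, hzpow]
    simp

/-- For a unimodular sequence `x ∈ ℂᴺ` (indexed from `0` here, so
`xₙ` for `n = 0, …, N-1`) with aperiodic autocorrelations
`r_k = ∑_{n=0}^{N-1-k} xₙ · conj(x_{n+k})`, the integrated sidelobe level
satisfies
`∑_{k=1}^{N-1} |r_k|² = (1/(4N)) ∑_{p=1}^{2N} (|∑ₙ xₙ e^{-i ω_p n}|² − N)²`,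
where `ω_p = 2π(p-1)/(2N)` (0-indexed: `ω_p = 2πp/(2N)`). -/
theorem aperiodic_isl_frequency_domain (N : ℕ) (hN : 0 < N) (x : ℕ → ℂ)
    (hx : ∀ n < N, ‖x n‖ = 1) :
    ∑ k ∈ Finset.range (N - 1),
        ‖∑ n ∈ Finset.range (N - (k + 1)), x n * (starRingEnd ℂ) (x (n + (k + 1)))‖ ^ 2
      = (1 / (4 * (N : ℝ))) *
          ∑ p ∈ Finset.range (2 * N),
            ((‖∑ n ∈ Finset.range N,
                x n * Complex.exp (-(Complex.I * (2 * Real.pi * (p : ℕ) / (2 * N)) * (n : ℕ)))‖) ^ 2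
              - (N : ℝ)) ^ 2 := by
  set w : ℤ → ℂ := fun a =>
    Complex.exp (-(Complex.I * (2 * (Real.pi : ℂ) / (2 * (N : ℂ))) * (a : ℂ))) with hw
  have hwmul : ∀ a b : ℤ, w a * w b = w (a + b) := by
    intro a b
    rw [hw, ← Complex.exp_add]
    congr 1
    push_cast
    ring
  have hw0 : w 0 = 1 := by rw [hw]; simp
  have hwconj : ∀ a : ℤ, (starRingEnd ℂ) (w a) = w (-a) := by
    intro a
    rw [hw]
    simp only
    rw [← Complex.exp_conj]
    congr 1
    simp only [map_neg, map_mul, map_div₀, Complex.conj_I, Complex.conj_ofReal, map_ofNat,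
      Complex.conj_natCast, map_intCast]
    push_cast
    ring
  have hroot : ∀ d : ℤ, ∑ p ∈ Finset.range (2 * N), w ((p : ℤ) * d)
      = if (2 * (N : ℤ)) ∣ d then (2 * (N : ℕ) : ℂ) else 0 := by
    intro d
    rw [hw]
    exact sum_root N hN d
  set u : ℕ → ℂ := fun k =>
    ∑ n ∈ Finset.range (N - (k + 1)), x n * (starRingEnd ℂ) (x (n + (k + 1))) with hu
  set S : ℕ → ℂ := fun p => ∑ k ∈ Finset.range (N - 1),
      (u k * w (-((p : ℤ) * ((k : ℤ) + 1))) + (starRingEnd ℂ) (u k) * w ((p : ℤ) * ((k : ℤ) + 1)))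
    with hS
  -- Step A
  have stepA : ∀ p : ℕ,
      (∑ n ∈ Finset.range N, x n * w ((p : ℤ) * (n : ℤ)))
        * (starRingEnd ℂ) (∑ n ∈ Finset.range N, x n * w ((p : ℤ) * (n : ℤ)))
      = (N : ℂ) + S p := by
    intro p
    rw [map_sum]
    simp only [map_mul, hwconj]
    rw [Finset.sum_mul_sum]
    have step1 : ∑ n ∈ Finset.range N, ∑ m ∈ Finset.range N,
        x n * w ((p : ℤ) * (n : ℤ)) * ((starRingEnd ℂ) (x m) * w (-((p : ℤ) * (m : ℤ))))
        = ∑ n ∈ Finset.range N, ∑ m ∈ Finset.range N,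
            x n * (starRingEnd ℂ) (x m) * w ((p : ℤ) * (n : ℤ) - (p : ℤ) * (m : ℤ)) := by
      refine Finset.sum_congr rfl fun n _ => Finset.sum_congr rfl fun m _ => ?_
      rw [mul_mul_mul_comm, hwmul]
      congr 2
    rw [step1, square_decomp N (fun n m => x n * (starRingEnd ℂ) (x m)
      * w ((p : ℤ) * (n : ℤ) - (p : ℤ) * (m : ℤ)))]
    congr 1
    · -- diagonal
      have hdiag : ∀ n ∈ Finset.range N,
          x n * (starRingEnd ℂ) (x n) * w ((p : ℤ) * (n : ℤ) - (p : ℤ) * (n : ℤ)) = 1 := by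
        intro n hn
        rw [Finset.mem_range] at hn
        have h1 : (p : ℤ) * (n : ℤ) - (p : ℤ) * (n : ℤ) = 0 := by ring
        rw [h1, hw0, mul_one, Complex.mul_conj]
        have h2 : Complex.normSq (x n) = 1 := by
          rw [← Complex.sq_norm, hx n hn]; norm_num
        rw [h2]
        simp
      rw [Finset.sum_congr rfl hdiag, Finset.sum_const, Finset.card_range, nsmul_eq_mul, mul_one]
    · -- off-diagonal
      rw [hS]
      refine Finset.sum_congr rfl fun k hk => ?_
      have e1 : ∀ j : ℕ, (p : ℤ) * (j : ℤ) - (p : ℤ) * ((j + (k + 1) : ℕ) : ℤ)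
          = -((p : ℤ) * ((k : ℤ) + 1)) := by
        intro j; push_cast; ring
      have e2 : ∀ j : ℕ, (p : ℤ) * ((j + (k + 1) : ℕ) : ℤ) - (p : ℤ) * (j : ℤ)
          = (p : ℤ) * ((k : ℤ) + 1) := by
        intro j; push_cast; ring
      have step2 : ∑ j ∈ Finset.range (N - (k + 1)),
          (x j * (starRingEnd ℂ) (x (j + (k + 1)))
              * w ((p : ℤ) * (j : ℤ) - (p : ℤ) * ((j + (k + 1) : ℕ) : ℤ))
            + x (j + (k + 1)) * (starRingEnd ℂ) (x j)
              * w ((p : ℤ) * ((j + (k + 1) : ℕ) : ℤ) - (p : ℤ) * (j : ℤ)))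
          = (∑ j ∈ Finset.range (N - (k + 1)), x j * (starRingEnd ℂ) (x (j + (k + 1))))
              * w (-((p : ℤ) * ((k : ℤ) + 1)))
            + (∑ j ∈ Finset.range (N - (k + 1)), x (j + (k + 1)) * (starRingEnd ℂ) (x j))
              * w ((p : ℤ) * ((k : ℤ) + 1)) := by
        rw [Finset.sum_add_distrib, Finset.sum_mul, Finset.sum_mul]
        congr 1
        · exact Finset.sum_congr rfl fun j _ => by rw [e1 j]
        · exact Finset.sum_congr rfl fun j _ => by rw [e2 j]
      rw [step2]
      have hconjuk : (starRingEnd ℂ) (u k)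
          = ∑ j ∈ Finset.range (N - (k + 1)), x (j + (k + 1)) * (starRingEnd ℂ) (x j) := by
        simp only [hu]
        rw [map_sum]
        refine Finset.sum_congr rfl fun j _ => ?_
        rw [map_mul, Complex.conj_conj, mul_comm]
      rw [hconjuk]
  -- small helper for non-divisibility
  have hnd : ∀ e : ℤ, e ≠ 0 → |e| < 2 * (N : ℤ) →
      (if (2 * (N : ℤ)) ∣ e then (2 * (N : ℕ) : ℂ) else 0) = 0 := by
    intro e h0 hlt
    rw [if_neg]
    intro hdvd
    exact h0 (Int.eq_zero_of_abs_lt_dvd hdvd hlt)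
  -- Step C
  have stepC : ∑ p ∈ Finset.range (2 * N), S p * S p
      = ((4 * N : ℕ) : ℂ) * ∑ k ∈ Finset.range (N - 1), u k * (starRingEnd ℂ) (u k) := by
    have e1 : ∀ p : ℕ, S p * S p
        = ∑ k ∈ Finset.range (N - 1), ∑ l ∈ Finset.range (N - 1),
            (u k * u l * w ((p : ℤ) * (-((k : ℤ) + 1) - ((l : ℤ) + 1)))
              + u k * (starRingEnd ℂ) (u l) * w ((p : ℤ) * (((l : ℤ) + 1) - ((k : ℤ) + 1)))
              + (starRingEnd ℂ) (u k) * u l * w ((p : ℤ) * (((k : ℤ) + 1) - ((l : ℤ) + 1)))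
              + (starRingEnd ℂ) (u k) * (starRingEnd ℂ) (u l)
                  * w ((p : ℤ) * (((k : ℤ) + 1) + ((l : ℤ) + 1)))) := by
      intro p
      rw [hS]
      simp only
      rw [Finset.sum_mul_sum]
      refine Finset.sum_congr rfl fun k _ => Finset.sum_congr rfl fun l _ => ?_
      have c1 : w (-((p : ℤ) * ((k : ℤ) + 1))) * w (-((p : ℤ) * ((l : ℤ) + 1)))
          = w ((p : ℤ) * (-((k : ℤ) + 1) - ((l : ℤ) + 1))) := by rw [hwmul]; congr 1; ring
      have c2 : w (-((p : ℤ) * ((k : ℤ) + 1))) * w ((p : ℤ) * ((l : ℤ) + 1))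
          = w ((p : ℤ) * (((l : ℤ) + 1) - ((k : ℤ) + 1))) := by rw [hwmul]; congr 1; ring
      have c3 : w ((p : ℤ) * ((k : ℤ) + 1)) * w (-((p : ℤ) * ((l : ℤ) + 1)))
          = w ((p : ℤ) * (((k : ℤ) + 1) - ((l : ℤ) + 1))) := by rw [hwmul]; congr 1; ring
      have c4 : w ((p : ℤ) * ((k : ℤ) + 1)) * w ((p : ℤ) * ((l : ℤ) + 1))
          = w ((p : ℤ) * (((k : ℤ) + 1) + ((l : ℤ) + 1))) := by rw [hwmul]; congr 1; ring
      calc (u k * w (-((p : ℤ) * ((k : ℤ) + 1))) + (starRingEnd ℂ) (u k) * w ((p : ℤ) * ((k : ℤ) + 1)))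
            * (u l * w (-((p : ℤ) * ((l : ℤ) + 1))) + (starRingEnd ℂ) (u l) * w ((p : ℤ) * ((l : ℤ) + 1)))
          = u k * u l * (w (-((p : ℤ) * ((k : ℤ) + 1))) * w (-((p : ℤ) * ((l : ℤ) + 1))))
            + u k * (starRingEnd ℂ) (u l) * (w (-((p : ℤ) * ((k : ℤ) + 1))) * w ((p : ℤ) * ((l : ℤ) + 1)))
            + (starRingEnd ℂ) (u k) * u l * (w ((p : ℤ) * ((k : ℤ) + 1)) * w (-((p : ℤ) * ((l : ℤ) + 1))))
            + (starRingEnd ℂ) (u k) * (starRingEnd ℂ) (u l)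
                * (w ((p : ℤ) * ((k : ℤ) + 1)) * w ((p : ℤ) * ((l : ℤ) + 1))) := by ring
        _ = _ := by rw [c1, c2, c3, c4]
    rw [Finset.sum_congr rfl fun p _ => e1 p]
    rw [Finset.sum_comm]
    have swap2 : ∀ k ∈ Finset.range (N - 1), ∑ p ∈ Finset.range (2 * N), ∑ l ∈ Finset.range (N - 1),
        (u k * u l * w ((p : ℤ) * (-((k : ℤ) + 1) - ((l : ℤ) + 1)))
          + u k * (starRingEnd ℂ) (u l) * w ((p : ℤ) * (((l : ℤ) + 1) - ((k : ℤ) + 1)))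
          + (starRingEnd ℂ) (u k) * u l * w ((p : ℤ) * (((k : ℤ) + 1) - ((l : ℤ) + 1)))
          + (starRingEnd ℂ) (u k) * (starRingEnd ℂ) (u l)
              * w ((p : ℤ) * (((k : ℤ) + 1) + ((l : ℤ) + 1))))
        = ∑ l ∈ Finset.range (N - 1), ∑ p ∈ Finset.range (2 * N),
        (u k * u l * w ((p : ℤ) * (-((k : ℤ) + 1) - ((l : ℤ) + 1)))
          + u k * (starRingEnd ℂ) (u l) * w ((p : ℤ) * (((l : ℤ) + 1) - ((k : ℤ) + 1)))
          + (starRingEnd ℂ) (u k) * u l * w ((p : ℤ) * (((k : ℤ) + 1) - ((l : ℤ) + 1)))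
          + (starRingEnd ℂ) (u k) * (starRingEnd ℂ) (u l)
              * w ((p : ℤ) * (((k : ℤ) + 1) + ((l : ℤ) + 1)))) := by
      intro k _
      exact Finset.sum_comm
    rw [Finset.sum_congr rfl swap2]
    have inner : ∀ k ∈ Finset.range (N - 1), ∀ l ∈ Finset.range (N - 1),
        ∑ p ∈ Finset.range (2 * N),
          (u k * u l * w ((p : ℤ) * (-((k : ℤ) + 1) - ((l : ℤ) + 1)))
            + u k * (starRingEnd ℂ) (u l) * w ((p : ℤ) * (((l : ℤ) + 1) - ((k : ℤ) + 1)))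
            + (starRingEnd ℂ) (u k) * u l * w ((p : ℤ) * (((k : ℤ) + 1) - ((l : ℤ) + 1)))
            + (starRingEnd ℂ) (u k) * (starRingEnd ℂ) (u l)
                * w ((p : ℤ) * (((k : ℤ) + 1) + ((l : ℤ) + 1))))
        = if l = k then ((4 * N : ℕ) : ℂ) * (u k * (starRingEnd ℂ) (u k)) else 0 := by
      intro k hk l hl
      rw [Finset.mem_range] at hk hl
      rw [Finset.sum_add_distrib, Finset.sum_add_distrib, Finset.sum_add_distrib,
        ← Finset.mul_sum, ← Finset.mul_sum, ← Finset.mul_sum, ← Finset.mul_sum,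
        hroot, hroot, hroot, hroot]
      rw [hnd (-((k : ℤ) + 1) - ((l : ℤ) + 1)) (by omega) (by rw [abs_lt]; omega)]
      rw [hnd (((k : ℤ) + 1) + ((l : ℤ) + 1)) (by omega) (by rw [abs_lt]; omega)]
      by_cases hkl : l = k
      · subst hkl
        have hz0 : ((l : ℤ) + 1 - ((l : ℤ) + 1)) = 0 := by ring
        rw [hz0, if_pos (dvd_zero _), if_pos rfl]
        push_cast
        ring
      · rw [if_neg hkl]
        rw [hnd (((l : ℤ) + 1) - ((k : ℤ) + 1)) (by omega) (by rw [abs_lt]; omega)]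
        rw [hnd (((k : ℤ) + 1) - ((l : ℤ) + 1)) (by omega) (by rw [abs_lt]; omega)]
        ring
    rw [Finset.sum_congr rfl fun k hk => Finset.sum_congr rfl fun l hl => inner k hk l hl]
    rw [Finset.mul_sum]
    refine Finset.sum_congr rfl fun k hk => ?_
    rw [Finset.sum_ite_eq' (Finset.range (N - 1)) k
      (fun _ => ((4 * N : ℕ) : ℂ) * (u k * (starRingEnd ℂ) (u k))), if_pos hk]
  have habs : ∀ z : ℂ, ((‖z‖ : ℝ) : ℂ) ^ 2 = z * (starRingEnd ℂ) z := by
    intro z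
    rw [← Complex.ofReal_pow, Complex.sq_norm, Complex.mul_conj]
  have hexp : ∀ p n : ℕ,
      Complex.exp (-(Complex.I * (2 * (Real.pi : ℂ) * (p : ℕ) / (2 * (N : ℂ))) * (n : ℕ)))
        = w ((p : ℤ) * (n : ℤ)) := by
    intro p n
    rw [hw]
    congr 1
    push_cast
    ring
  rw [← Complex.ofReal_inj]
  push_cast
  simp only [hexp, habs]
  have hR : ∑ p ∈ Finset.range (2 * N),
      ((∑ n ∈ Finset.range N, x n * w ((p : ℤ) * (n : ℤ)))
        * (starRingEnd ℂ) (∑ n ∈ Finset.range N, x n * w ((p : ℤ) * (n : ℤ))) - (N : ℂ)) ^ 2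
      = ((4 * N : ℕ) : ℂ) * ∑ k ∈ Finset.range (N - 1), u k * (starRingEnd ℂ) (u k) := by
    rw [← stepC]
    refine Finset.sum_congr rfl fun p _ => ?_
    rw [stepA p, add_sub_cancel_left, sq]
  rw [hR]
  have hL : ∑ k ∈ Finset.range (N - 1),
      (∑ n ∈ Finset.range (N - (k + 1)), x n * (starRingEnd ℂ) (x (n + (k + 1))))
        * (starRingEnd ℂ) (∑ n ∈ Finset.range (N - (k + 1)), x n * (starRingEnd ℂ) (x (n + (k + 1))))
      = ∑ k ∈ Finset.range (N - 1), u k * (starRingEnd ℂ) (u k) :=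
    Finset.sum_congr rfl fun k _ => rfl
  rw [hL]
  have h4 : ((N : ℂ)) ≠ 0 := Nat.cast_ne_zero.mpr hN.ne'
  push_cast
  field_simp
end
end

section
/- Let x₀ ∈ ℂᴺ be unimodular, p ∈ ℝ^{2N} the vector with entries p_p = |a_pᴴx₀|², p_max = max_{1≤p≤2N} p_p, and define u(x, x₀) = 4·Re( xᴴ A (Diag(p) − (p_max + N²)·I) Aᴴ x₀ ) + 8N²(p_max + N²) − 3·Σ_{p=1}^{2N} |a_pᴴx₀|⁴. Then u(·, x₀) majorizes the quartic objective f(x) = Σ_{p=1}^{2N} |a_pᴴx|⁴ at x₀ over the unimodular set: u(x, x₀) ≥ f(x) for every unimodular x ∈ ℂᴺ, and u(x₀, x₀) = f(x₀). -/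
open Matrix Finset

noncomputable section

/-- The `N × 2N` matrix `A = [a_1, …, a_{2N}]` whose `p`-th column is `a_p`. -/
def Amat (N : ℕ) : Matrix (Fin N) (Fin (2 * N)) ℂ := fun n p => aVec N p n

/-- The vector `p ∈ ℝ^{2N}` with entries `p_p = |a_pᴴ x₀|²`. -/
def pVec (N : ℕ) (x₀ : Fin N → ℂ) : Fin (2 * N) → ℝ :=
  fun p => ‖star (aVec N p) ⬝ᵥ x₀‖ ^ 2

/-- `p_max = max_{1 ≤ p ≤ 2N} p_p`. -/
def pMax (N : ℕ) (x₀ : Fin N → ℂ) : ℝ := ⨆ p : Fin (2 * N), pVec N x₀ p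

/-- The quartic ISL objective `f(x) = ∑_{p=1}^{2N} |a_pᴴ x|⁴`. -/
def fObj (N : ℕ) (x : Fin N → ℂ) : ℝ :=
  ∑ p : Fin (2 * N), ‖star (aVec N p) ⬝ᵥ x‖ ^ 4

/-- The MISL majorizer
`u(x, x₀) = 4 Re(xᴴ A (Diag(p) − (p_max + N²) I) Aᴴ x₀) + 8N²(p_max + N²)
  − 3 ∑_{p=1}^{2N} |a_pᴴ x₀|⁴`. -/
def uMaj (N : ℕ) (x x₀ : Fin N → ℂ) : ℝ :=
  4 * (star x ⬝ᵥ (Amat N *ᵥ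
        ((Matrix.diagonal (fun p => (pVec N x₀ p : ℂ))
            - (((pMax N x₀ : ℝ) : ℂ) + (N : ℂ) ^ 2) • (1 : Matrix (Fin (2 * N)) (Fin (2 * N)) ℂ))
          *ᵥ ((Amat N)ᴴ *ᵥ x₀)))).re
    + 8 * (N : ℝ) ^ 2 * (pMax N x₀ + (N : ℝ) ^ 2)
    - 3 * ∑ p : Fin (2 * N), ‖star (aVec N p) ⬝ᵥ x₀‖ ^ 4

/-- The unimodular constraint set `C = {x ∈ ℂᴺ : |xₙ| = 1 ∀ n}`. -/
def uniSet (N : ℕ) : Set (Fin N → ℂ) := {x | ∀ n, ‖x n‖ = 1}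

namespace MISL

def E (N : ℕ) (k : ℤ) : ℂ := Complex.exp (Real.pi * Complex.I * k / N)

lemma E_add (N : ℕ) (j k : ℤ) : E N (j + k) = E N j * E N k := by
  rw [E, E, E, ← Complex.exp_add]
  congr 1
  push_cast
  ring

lemma E_zero (N : ℕ) : E N 0 = 1 := by simp [E]

lemma E_conj (N : ℕ) (k : ℤ) : (starRingEnd ℂ) (E N k) = E N (-k) := by
  rw [E, E, ← Complex.exp_conj]
  congr 1
  simp [map_div₀]

lemma E_pow (N : ℕ) (k : ℤ) (p : ℕ) : E N k ^ p = E N (p * k) := by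
  rw [E, E, ← Complex.exp_nat_mul]
  congr 1
  push_cast
  ring

lemma aVec_eq (N : ℕ) (hN : 0 < N) (p : Fin (2 * N)) (n : Fin N) :
    aVec N p n = E N ((p : ℤ) * (n : ℤ)) := by
  rw [aVec, omega, E]
  congr 1
  have hNR : (N : ℂ) ≠ 0 := Nat.cast_ne_zero.mpr hN.ne'
  push_cast
  field_simp

lemma E_sum (N : ℕ) (hN : 0 < N) (k : ℤ) (hk : k.natAbs < 2 * N) :
    ∑ p : Fin (2 * N), E N ((p : ℤ) * k) = if k = 0 then (2 * N : ℂ) else 0 := by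
  by_cases h : k = 0
  · simp [h, E_zero]
  · rw [if_neg h]
    have hne : E N k ≠ 1 := by
      intro hE
      rw [E, Complex.exp_eq_one_iff] at hE
      obtain ⟨m, hm⟩ := hE
      have hNR : (N : ℂ) ≠ 0 := Nat.cast_ne_zero.mpr hN.ne'
      have hpi : (Real.pi : ℂ) ≠ 0 := Complex.ofReal_ne_zero.mpr Real.pi_ne_zero
      have hI : Complex.I ≠ 0 := Complex.I_ne_zero
      have h2 : (Real.pi : ℂ) * Complex.I * (k : ℂ)
          = (Real.pi : ℂ) * Complex.I * (2 * N * m : ℂ) := by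
        field_simp at hm
        rw [hm]; ring
      have h3 : (k : ℂ) = ((2 * N * m : ℤ) : ℂ) := by
        have := mul_left_cancel₀ (mul_ne_zero hpi hI) h2
        rw [this]; push_cast; ring
      have hk2 : k = 2 * N * m := by exact_mod_cast h3
      have hm0 : m ≠ 0 := by rintro rfl; simp at hk2; omega
      have : k.natAbs = 2 * N * m.natAbs := by
        rw [hk2, Int.natAbs_mul, Int.natAbs_mul]; simp
      have h1m : 1 ≤ m.natAbs := Int.natAbs_pos.mpr hm0
      nlinarith [this, hk, h1m]
    have hcast : ∀ p : Fin (2 * N), E N ((p : ℤ) * k) = E N k ^ (p : ℕ) := by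
      intro p; rw [E_pow]
    simp_rw [hcast]
    rw [Fin.sum_univ_eq_sum_range (fun i => E N k ^ i), geom_sum_eq hne]
    have : E N k ^ (2 * N) = 1 := by
      rw [E_pow, E, ]
      have hNR : (N : ℂ) ≠ 0 := Nat.cast_ne_zero.mpr hN.ne'
      have : (Real.pi : ℂ) * Complex.I * ((2 * N : ℕ) * k : ℤ) / N
          = (k : ℤ) * (2 * Real.pi * Complex.I) := by
        push_cast; field_simp
      rw [this, Complex.exp_int_mul_two_pi_mul_I]
    rw [this, sub_self, zero_div]


lemma key_expand (N : ℕ) (hN : 0 < N) (v w : Fin N → ℂ) (p : Fin (2 * N)) :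
    (star (aVec N p) ⬝ᵥ v) * (starRingEnd ℂ) (star (aVec N p) ⬝ᵥ w)
      = ∑ m, ∑ n, (v m * (starRingEnd ℂ) (w n)) * E N ((p : ℤ) * ((n : ℤ) - (m : ℤ))) := by
  rw [dotProduct, dotProduct, map_sum, Finset.sum_mul_sum]
  refine Finset.sum_congr rfl fun m _ => Finset.sum_congr rfl fun n _ => ?_
  simp only [Pi.star_apply, Complex.star_def, _root_.map_mul, Complex.conj_conj,
    aVec_eq N hN, E_conj, neg_neg]
  rw [show (p : ℤ) * ((n : ℤ) - (m : ℤ)) = -((p : ℤ) * (m : ℤ)) + (p : ℤ) * (n : ℤ) by ring,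
    E_add]
  ring

lemma sum_dot (N : ℕ) (hN : 0 < N) (v w : Fin N → ℂ) :
    ∑ p : Fin (2 * N), (star (aVec N p) ⬝ᵥ v) * (starRingEnd ℂ) (star (aVec N p) ⬝ᵥ w)
      = 2 * N * ∑ n, v n * (starRingEnd ℂ) (w n) := by
  simp_rw [key_expand N hN v w]
  rw [Finset.sum_comm]
  have step1 : ∀ m : Fin N,
      (∑ p : Fin (2 * N), ∑ n, (v m * (starRingEnd ℂ) (w n)) * E N ((p : ℤ) * ((n : ℤ) - (m : ℤ))))
      = ∑ n, (v m * (starRingEnd ℂ) (w n)) * (if ((n : ℤ) - (m : ℤ)) = 0 then (2*N : ℂ) else 0) := by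
    intro m
    rw [Finset.sum_comm]
    refine Finset.sum_congr rfl fun n _ => ?_
    rw [← Finset.mul_sum, E_sum N hN _ (by omega)]
  simp_rw [step1]
  have hcond : ∀ m n : Fin N, (((n : ℤ) - (m : ℤ)) = 0) = (n = m) := by
    intro m n; apply propext
    constructor
    · intro h; exact Fin.ext (by omega)
    · rintro rfl; ring
  simp_rw [hcond]
  simp only [mul_ite, mul_zero, Finset.sum_ite_eq', Finset.mem_univ, if_true]
  rw [Finset.mul_sum]
  exact Finset.sum_congr rfl fun m _ => by ring

variable {ι : Type*} [Fintype ι] [DecidableEq ι]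

lemma expand_sq (N : ℕ) (hN : 0 < N) (D : ι → ℂ) (d : ι → ℤ)
    (hd : ∀ u u' : ι, (d u - d u').natAbs < 2 * N) :
    ∑ p : Fin (2 * N), (∑ u, D u * E N ((p : ℤ) * d u)) *
        (starRingEnd ℂ) (∑ u', D u' * E N ((p : ℤ) * d u'))
      = 2 * N * ∑ u, ∑ u', if d u = d u' then D u * (starRingEnd ℂ) (D u') else 0 := by
  have h1 : ∀ p : Fin (2 * N),
      (∑ u, D u * E N ((p : ℤ) * d u)) * (starRingEnd ℂ) (∑ u', D u' * E N ((p : ℤ) * d u'))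
      = ∑ u, ∑ u', (D u * (starRingEnd ℂ) (D u')) * E N ((p : ℤ) * (d u - d u')) := by
    intro p
    rw [map_sum, Finset.sum_mul_sum]
    refine Finset.sum_congr rfl fun u _ => Finset.sum_congr rfl fun u' _ => ?_
    rw [_root_.map_mul, E_conj,
      show (p : ℤ) * (d u - d u') = (p : ℤ) * d u + -((p : ℤ) * d u') by ring, E_add]
    ring
  simp_rw [h1]
  rw [Finset.sum_comm]
  rw [Finset.mul_sum]
  refine Finset.sum_congr rfl fun u _ => ?_
  rw [Finset.sum_comm, Finset.mul_sum]
  refine Finset.sum_congr rfl fun u' _ => ?_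
  rw [← Finset.mul_sum, E_sum N hN _ (hd u u')]
  by_cases h : d u = d u'
  · simp [sub_eq_zero.mpr h, h]; ring
  · simp [sub_eq_zero, h]


lemma sum_ite_const (c : ℝ) (p : ι → Prop) [DecidablePred p] :
    ∑ u, (if p u then c else 0) = (Finset.univ.filter p).card * c := by
  rw [Finset.sum_ite, Finset.sum_const, Finset.sum_const_zero, add_zero, nsmul_eq_mul]

lemma re_quad_le (K : ℕ) (D : ι → ℂ) (d : ι → ℤ)
    (hcard : ∀ t : ℤ, (Finset.univ.filter (fun u : ι => d u = t)).card ≤ K) :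
    (∑ u, ∑ u', if d u = d u' then D u * (starRingEnd ℂ) (D u') else 0).re
      ≤ K * ∑ u, Complex.normSq (D u) := by
  rw [Complex.re_sum]
  simp_rw [Complex.re_sum]
  have step : ∀ u u' : ι, (if d u = d u' then D u * (starRingEnd ℂ) (D u') else 0).re
      ≤ (if d u = d u' then (Complex.normSq (D u) + Complex.normSq (D u')) / 2 else 0) := by
    intro u u'
    by_cases h : d u = d u'
    · simp only [h, if_true]
      have h1 : (D u * (starRingEnd ℂ) (D u')).re ≤ ‖D u‖ * ‖D u'‖ := by
        calc (D u * (starRingEnd ℂ) (D u')).re ≤ ‖D u * (starRingEnd ℂ) (D u')‖ :=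
              Complex.re_le_norm _
          _ = ‖D u‖ * ‖D u'‖ := by
              rw [norm_mul, Complex.norm_conj]
      have h2 : ‖D u‖ * ‖D u'‖
          ≤ (Complex.normSq (D u) + Complex.normSq (D u')) / 2 := by
        rw [← Complex.sq_norm, ← Complex.sq_norm]
        nlinarith [sq_nonneg (‖D u‖ - ‖D u'‖)]
      linarith
    · simp [h]
  calc (∑ u, ∑ u', (if d u = d u' then D u * (starRingEnd ℂ) (D u') else 0).re)
      ≤ ∑ u, ∑ u', (if d u = d u' then (Complex.normSq (D u) + Complex.normSq (D u')) / 2 else 0) :=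
        Finset.sum_le_sum fun u _ => Finset.sum_le_sum fun u' _ => step u u'
    _ = (∑ u, ∑ u', (if d u = d u' then Complex.normSq (D u) else 0)) / 2
        + (∑ u, ∑ u', (if d u = d u' then Complex.normSq (D u') else 0)) / 2 := by
        simp_rw [Finset.sum_div, ← Finset.sum_add_distrib]
        refine Finset.sum_congr rfl fun u _ => Finset.sum_congr rfl fun u' _ => ?_
        by_cases h : d u = d u'
        · simp only [if_pos h]; ring
        · simp only [if_neg h]; ring
    _ ≤ (K * ∑ u, Complex.normSq (D u)) / 2 + (K * ∑ u, Complex.normSq (D u)) / 2 := by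
        gcongr ?_ / 2 + ?_ / 2
        · calc ∑ u, ∑ u', (if d u = d u' then Complex.normSq (D u) else 0)
              = ∑ u, ((Finset.univ.filter (fun u' : ι => d u = d u')).card : ℝ)
                  * Complex.normSq (D u) :=
                Finset.sum_congr rfl fun u _ => sum_ite_const _ _
            _ ≤ ∑ u, (K : ℝ) * Complex.normSq (D u) := by
                refine Finset.sum_le_sum fun u _ => ?_
                have h1 : (Finset.univ.filter (fun u' : ι => d u = d u')).card ≤ K := by
                  have he : (Finset.univ.filter (fun u' : ι => d u = d u'))
                      = (Finset.univ.filter (fun u' : ι => d u' = d u)) := by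
                    ext u'; simp [eq_comm]
                  rw [he]; exact hcard (d u)
                exact mul_le_mul_of_nonneg_right (by exact_mod_cast h1) (Complex.normSq_nonneg _)
            _ = K * ∑ u, Complex.normSq (D u) := by rw [Finset.mul_sum]
        · rw [Finset.sum_comm]
          calc ∑ u', ∑ u, (if d u = d u' then Complex.normSq (D u') else 0)
              = ∑ u', ((Finset.univ.filter (fun u : ι => d u = d u')).card : ℝ)
                  * Complex.normSq (D u') :=
                Finset.sum_congr rfl fun u' _ => sum_ite_const _ _
            _ ≤ ∑ u', (K : ℝ) * Complex.normSq (D u') := by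
                refine Finset.sum_le_sum fun u' _ => ?_
                exact mul_le_mul_of_nonneg_right (by exact_mod_cast hcard (d u'))
                  (Complex.normSq_nonneg _)
            _ = K * ∑ u, Complex.normSq (D u) := by rw [Finset.mul_sum]
    _ = K * ∑ u, Complex.normSq (D u) := by ring

/-- fibers of the "difference of indices" map have at most N elements -/
lemma fiber_card (N : ℕ) (t : ℤ) :
    (Finset.univ.filter (fun u : Fin N × Fin N => ((u.2 : ℤ) - (u.1 : ℤ)) = t)).card ≤ N := by
  have h := Finset.card_le_card_of_injOn (f := fun u : Fin N × Fin N => u.1)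
    (s := Finset.univ.filter (fun u : Fin N × Fin N => ((u.2 : ℤ) - (u.1 : ℤ)) = t))
    (t := Finset.univ) (fun u _ => Finset.mem_univ u.1) ?_
  · simpa using h
  · intro u hu v hv huv
    simp only [Finset.coe_filter, Set.mem_setOf_eq, Finset.mem_univ, true_and] at hu hv
    have h2 : (u.2 : ℤ) = (v.2 : ℤ) := by
      have : (u.1 : ℤ) = (v.1 : ℤ) := by exact_mod_cast congrArg Fin.val huv
      omega
    exact Prod.ext huv (Fin.ext (by exact_mod_cast h2))

/-- The quadratic-form bound:  ∑_p |⟨B, a_p a_pᴴ⟩|² ≤ 2N² ‖B‖². -/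
lemma quad (N : ℕ) (hN : 0 < N) (D : Fin N × Fin N → ℂ) :
    ∑ p : Fin (2 * N),
        Complex.normSq (∑ u : Fin N × Fin N, D u * E N ((p : ℤ) * ((u.2 : ℤ) - (u.1 : ℤ))))
      ≤ 2 * (N : ℝ) ^ 2 * ∑ u, Complex.normSq (D u) := by
  have hd : ∀ u u' : Fin N × Fin N,
      ((((u.2 : ℤ) - u.1)) - (((u'.2 : ℤ) - u'.1))).natAbs < 2 * N := by
    intro u u'
    have h1 := u.1.isLt; have h2 := u.2.isLt; have h3 := u'.1.isLt; have h4 := u'.2.isLt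
    omega
  have hexp := expand_sq N hN D (fun u => ((u.2 : ℤ) - u.1)) hd
  have hre := re_quad_le N D (fun u => ((u.2 : ℤ) - u.1)) (fiber_card N)
  have hcast : ∑ p : Fin (2 * N),
      Complex.normSq (∑ u : Fin N × Fin N, D u * E N ((p : ℤ) * ((u.2 : ℤ) - (u.1 : ℤ))))
      = (∑ p : Fin (2 * N), (∑ u, D u * E N ((p : ℤ) * ((u.2 : ℤ) - u.1))) *
          (starRingEnd ℂ) (∑ u', D u' * E N ((p : ℤ) * ((u'.2 : ℤ) - u'.1)))).re := by
    rw [Complex.re_sum]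
    exact Finset.sum_congr rfl fun p _ => by rw [Complex.mul_conj]; simp
  rw [hcast, hexp]
  have : ((2 * (N : ℂ)) * ∑ u, ∑ u', if ((u.2 : ℤ) - u.1) = ((u'.2 : ℤ) - u'.1)
      then D u * (starRingEnd ℂ) (D u') else 0).re
      = 2 * (N : ℝ) * (∑ u, ∑ u', if ((u.2 : ℤ) - u.1) = ((u'.2 : ℤ) - u'.1)
      then D u * (starRingEnd ℂ) (D u') else 0).re := by
    rw [show (2 * (N : ℂ)) = ((2 * N : ℝ) : ℂ) by push_cast; ring, Complex.re_ofReal_mul]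
  rw [this]
  have hN' : (0 : ℝ) ≤ 2 * N := by positivity
  nlinarith [hre, Finset.sum_nonneg (fun u (_ : u ∈ Finset.univ) => Complex.normSq_nonneg (D u))]

/-- abs² as a complex number -/
lemma abs_sq_complex (z : ℂ) : ((‖z‖ ^ 2 : ℝ) : ℂ) = z * (starRingEnd ℂ) z := by
  rw [Complex.mul_conj, Complex.sq_norm]

lemma stepA (N : ℕ) (hN : 0 < N) (x x₀ : Fin N → ℂ)
    (hx : ∀ n, ‖x n‖ = 1) (hx₀ : ∀ n, ‖x₀ n‖ = 1) :
    ∑ p : Fin (2 * N),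
        (‖star (aVec N p) ⬝ᵥ x‖ ^ 2 - ‖star (aVec N p) ⬝ᵥ x₀‖ ^ 2) ^ 2
      ≤ 4 * (N : ℝ) ^ 4
        - 4 * (N : ℝ) ^ 2 * Complex.normSq (∑ n, x n * (starRingEnd ℂ) (x₀ n)) := by
  set D : Fin N × Fin N → ℂ :=
    fun u => x u.1 * (starRingEnd ℂ) (x u.2) - x₀ u.1 * (starRingEnd ℂ) (x₀ u.2) with hD
  -- the complex value of q_p - p_p is the Fourier sum of D
  have hT : ∀ p : Fin (2 * N),
      ((‖star (aVec N p) ⬝ᵥ x‖ ^ 2 - ‖star (aVec N p) ⬝ᵥ x₀‖ ^ 2 : ℝ) : ℂ)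
        = ∑ u : Fin N × Fin N, D u * E N ((p : ℤ) * ((u.2 : ℤ) - (u.1 : ℤ))) := by
    intro p
    rw [Complex.ofReal_sub, abs_sq_complex, abs_sq_complex, key_expand N hN x x,
      key_expand N hN x₀ x₀]
    rw [← Finset.sum_sub_distrib]
    rw [Fintype.sum_prod_type]
    refine Finset.sum_congr rfl fun m _ => ?_
    rw [← Finset.sum_sub_distrib]
    exact Finset.sum_congr rfl fun n _ => by rw [hD]; ring
  -- apply the quadratic bound
  have hq := quad N hN D
  have hLHS : ∑ p : Fin (2 * N),
      (‖star (aVec N p) ⬝ᵥ x‖ ^ 2 - ‖star (aVec N p) ⬝ᵥ x₀‖ ^ 2) ^ 2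
      = ∑ p : Fin (2 * N),
        Complex.normSq (∑ u : Fin N × Fin N, D u * E N ((p : ℤ) * ((u.2 : ℤ) - (u.1 : ℤ)))) := by
    refine Finset.sum_congr rfl fun p _ => ?_
    rw [← hT p, Complex.normSq_ofReal]
    ring
  -- compute ∑ ‖D‖²
  have hB : ∑ u : Fin N × Fin N, Complex.normSq (D u)
      = 2 * (N : ℝ) ^ 2 - 2 * Complex.normSq (∑ n, x n * (starRingEnd ℂ) (x₀ n)) := by
    have hpt : ∀ u : Fin N × Fin N, Complex.normSq (D u)
        = 2 - 2 * ((x u.1 * (starRingEnd ℂ) (x₀ u.1))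
            * (starRingEnd ℂ) (x u.2 * (starRingEnd ℂ) (x₀ u.2))).re := by
      intro u
      rw [hD]
      rw [Complex.normSq_sub]
      have n1 : Complex.normSq (x u.1 * (starRingEnd ℂ) (x u.2)) = 1 := by
        rw [Complex.normSq_mul, Complex.normSq_conj, ← Complex.sq_norm, ← Complex.sq_norm,
          hx u.1, hx u.2]; norm_num
      have n2 : Complex.normSq (x₀ u.1 * (starRingEnd ℂ) (x₀ u.2)) = 1 := by
        rw [Complex.normSq_mul, Complex.normSq_conj, ← Complex.sq_norm, ← Complex.sq_norm,
          hx₀ u.1, hx₀ u.2]; norm_num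
      rw [n1, n2]
      have : (x u.1 * (starRingEnd ℂ) (x u.2)) * (starRingEnd ℂ) (x₀ u.1 * (starRingEnd ℂ) (x₀ u.2))
          = (x u.1 * (starRingEnd ℂ) (x₀ u.1)) * (starRingEnd ℂ) (x u.2 * (starRingEnd ℂ) (x₀ u.2)) := by
        simp only [_root_.map_mul, Complex.conj_conj]
        ring
      rw [this]
      ring
    rw [Finset.sum_congr rfl fun u _ => hpt u]
    rw [Finset.sum_sub_distrib]
    have hcross : ∑ u : Fin N × Fin N,
        2 * ((x u.1 * (starRingEnd ℂ) (x₀ u.1))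
            * (starRingEnd ℂ) (x u.2 * (starRingEnd ℂ) (x₀ u.2))).re
        = 2 * Complex.normSq (∑ n, x n * (starRingEnd ℂ) (x₀ n)) := by
      rw [← Finset.mul_sum, ← Complex.re_sum]
      congr 1
      have : ∑ u : Fin N × Fin N, (x u.1 * (starRingEnd ℂ) (x₀ u.1))
              * (starRingEnd ℂ) (x u.2 * (starRingEnd ℂ) (x₀ u.2))
          = (∑ n, x n * (starRingEnd ℂ) (x₀ n))
            * (starRingEnd ℂ) (∑ n, x n * (starRingEnd ℂ) (x₀ n)) := by
        rw [map_sum, Finset.sum_mul_sum, Fintype.sum_prod_type]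
      rw [this, Complex.mul_conj, Complex.ofReal_re]
    rw [hcross]
    simp [Finset.card_univ]
    ring
  rw [hLHS]
  calc _ ≤ 2 * (N : ℝ) ^ 2 * ∑ u, Complex.normSq (D u) := hq
    _ = _ := by rw [hB]; ring


lemma conjTrans_mulVec (N : ℕ) (x₀ : Fin N → ℂ) (p : Fin (2 * N)) :
    ((Amat N)ᴴ *ᵥ x₀) p = star (aVec N p) ⬝ᵥ x₀ := by
  simp [Matrix.mulVec, Matrix.conjTranspose, dotProduct, Amat]

lemma uMaj_eq (N : ℕ) (x x₀ : Fin N → ℂ) :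
    uMaj N x x₀ = 4 * ∑ p : Fin (2 * N),
        (pVec N x₀ p - (pMax N x₀ + (N : ℝ) ^ 2))
          * ((star (aVec N p) ⬝ᵥ x₀) * (starRingEnd ℂ) (star (aVec N p) ⬝ᵥ x)).re
      + 8 * (N : ℝ) ^ 2 * (pMax N x₀ + (N : ℝ) ^ 2)
      - 3 * ∑ p : Fin (2 * N), ‖star (aVec N p) ⬝ᵥ x₀‖ ^ 4 := by
  rw [uMaj]
  congr 2
  congr 1
  -- the Re term
  have hw2 : ((Matrix.diagonal (fun p => (pVec N x₀ p : ℂ))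
      - (((pMax N x₀ : ℝ) : ℂ) + (N : ℂ) ^ 2) • (1 : Matrix (Fin (2 * N)) (Fin (2 * N)) ℂ))
      *ᵥ ((Amat N)ᴴ *ᵥ x₀))
      = fun p => ((pVec N x₀ p - (pMax N x₀ + (N : ℝ) ^ 2) : ℝ) : ℂ)
          * (star (aVec N p) ⬝ᵥ x₀) := by
    funext p
    rw [Matrix.sub_mulVec, Matrix.smul_mulVec, Matrix.one_mulVec]
    simp only [Pi.sub_apply, Pi.smul_apply, Matrix.mulVec_diagonal, smul_eq_mul,
      conjTrans_mulVec]
    push_cast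
    ring
  rw [hw2]
  have tri : star x ⬝ᵥ (Amat N *ᵥ (fun p => ((pVec N x₀ p - (pMax N x₀ + (N : ℝ) ^ 2) : ℝ) : ℂ)
          * (star (aVec N p) ⬝ᵥ x₀)))
      = ∑ p : Fin (2 * N), ((pVec N x₀ p - (pMax N x₀ + (N : ℝ) ^ 2) : ℝ) : ℂ)
          * ((star (aVec N p) ⬝ᵥ x₀) * (starRingEnd ℂ) (star (aVec N p) ⬝ᵥ x)) := by
    simp only [Matrix.mulVec, dotProduct, Amat, Pi.star_apply, Complex.star_def, map_sum,
      _root_.map_mul, Complex.conj_conj, Finset.mul_sum, Finset.sum_mul]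
    rw [Finset.sum_comm]
    refine Finset.sum_congr rfl fun p _ => Finset.sum_congr rfl fun n _ => ?_
    ring_nf
  rw [tri, Complex.re_sum]
  exact Finset.sum_congr rfl fun p _ => by rw [Complex.re_ofReal_mul]

lemma sum_pVec (N : ℕ) (hN : 0 < N) (x₀ : Fin N → ℂ) (hx₀ : ∀ n, ‖x₀ n‖ = 1) :
    ∑ p : Fin (2 * N), pVec N x₀ p = 2 * (N : ℝ) ^ 2 := by
  have h := sum_dot N hN x₀ x₀
  have h2 : ∀ n, x₀ n * (starRingEnd ℂ) (x₀ n) = 1 := by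
    intro n
    rw [Complex.mul_conj, ← Complex.sq_norm, hx₀ n]
    norm_num
  rw [Finset.sum_congr rfl fun n _ => h2 n] at h
  have := congrArg Complex.re h
  rw [Complex.re_sum] at this
  have h3 : ∀ p : Fin (2 * N),
      ((star (aVec N p) ⬝ᵥ x₀) * (starRingEnd ℂ) (star (aVec N p) ⬝ᵥ x₀)).re = pVec N x₀ p := by
    intro p
    rw [Complex.mul_conj, Complex.ofReal_re, pVec, Complex.sq_norm]
  rw [Finset.sum_congr rfl fun p _ => h3 p] at this
  rw [this]
  simp [Finset.card_univ]
  push_cast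
  ring

lemma pVec_le_pMax (N : ℕ) (hN : 0 < N) (x₀ : Fin N → ℂ) (p : Fin (2 * N)) :
    pVec N x₀ p ≤ pMax N x₀ :=
  le_ciSup (Set.Finite.bddAbove (Set.finite_range _)) p


end MISL

open MISL

/-- For unimodular `x₀`, the function `u(·, x₀)` majorizes the
quartic objective `f(x) = ∑_{p=1}^{2N} |a_pᴴ x|⁴` at `x₀` over the unimodular
set: `u(x, x₀) ≥ f(x)` for every unimodular `x`, and `u(x₀, x₀) = f(x₀)`. -/
theorem uMaj_majorizes_fObj (N : ℕ) (hN : 0 < N) (x₀ : Fin N → ℂ)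
    (hx₀ : x₀ ∈ uniSet N) :
    (∀ x ∈ uniSet N, fObj N x ≤ uMaj N x x₀) ∧ uMaj N x₀ x₀ = fObj N x₀ := by
  have hx₀' : ∀ n, ‖x₀ n‖ = 1 := hx₀
  have hzz : ∀ p : Fin (2 * N),
      ((star (aVec N p) ⬝ᵥ x₀) * (starRingEnd ℂ) (star (aVec N p) ⬝ᵥ x₀)).re = pVec N x₀ p :=
    fun p => by rw [Complex.mul_conj, Complex.ofReal_re, pVec, Complex.sq_norm]
  constructor
  · intro x hx
    have hx' : ∀ n, ‖x n‖ = 1 := hx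
    -- abbreviations (plain lets via notation only in comments):
    -- q p = |a_pᴴx|², pp p = pVec p, r p = Re(z_p ȳ_p), s = ∑ x ᝰx₀
    have hA : ∑ p : Fin (2 * N),
        (‖star (aVec N p) ⬝ᵥ x‖ ^ 2 - pVec N x₀ p) ^ 2
        ≤ 4 * (N : ℝ) ^ 4
          - 4 * (N : ℝ) ^ 2 * Complex.normSq (∑ n, x n * (starRingEnd ℂ) (x₀ n)) := by
      have := stepA N hN x x₀ hx' hx₀'
      exact this
    -- |y_p - z_p|² = q + pp - 2r
    have hyz : ∀ p : Fin (2 * N),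
        Complex.normSq ((star (aVec N p) ⬝ᵥ x) - (star (aVec N p) ⬝ᵥ x₀))
          = ‖star (aVec N p) ⬝ᵥ x‖ ^ 2 + pVec N x₀ p
            - 2 * ((star (aVec N p) ⬝ᵥ x₀) * (starRingEnd ℂ) (star (aVec N p) ⬝ᵥ x)).re := by
      intro p
      rw [Complex.normSq_sub]
      have h1 : ((star (aVec N p) ⬝ᵥ x) * (starRingEnd ℂ) (star (aVec N p) ⬝ᵥ x₀)).re
          = ((star (aVec N p) ⬝ᵥ x₀) * (starRingEnd ℂ) (star (aVec N p) ⬝ᵥ x)).re := by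
        rw [show (star (aVec N p) ⬝ᵥ x) * (starRingEnd ℂ) (star (aVec N p) ⬝ᵥ x₀)
          = (starRingEnd ℂ) ((star (aVec N p) ⬝ᵥ x₀) * (starRingEnd ℂ) (star (aVec N p) ⬝ᵥ x))
          by rw [_root_.map_mul, Complex.conj_conj]; ring]
        rw [Complex.conj_re]
      rw [h1, pVec, Complex.sq_norm, Complex.sq_norm]
    -- ∑ |y-z|² = 4N² - 4N Re s
    have hsumyz : ∑ p : Fin (2 * N),
        Complex.normSq ((star (aVec N p) ⬝ᵥ x) - (star (aVec N p) ⬝ᵥ x₀))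
        = 4 * (N : ℝ) ^ 2
          - 4 * (N : ℝ) * (∑ n, x n * (starRingEnd ℂ) (x₀ n)).re := by
      have h := congrArg Complex.re (sum_dot N hN (x - x₀) (x - x₀))
      have hsub : ∀ p : Fin (2 * N), star (aVec N p) ⬝ᵥ (x - x₀)
          = (star (aVec N p) ⬝ᵥ x) - (star (aVec N p) ⬝ᵥ x₀) := fun p => dotProduct_sub _ _ _
      simp only [hsub] at h
      rw [Complex.re_sum] at h
      have hl : ∀ p : Fin (2 * N),
          (((star (aVec N p) ⬝ᵥ x) - (star (aVec N p) ⬝ᵥ x₀)) *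
            (starRingEnd ℂ) ((star (aVec N p) ⬝ᵥ x) - (star (aVec N p) ⬝ᵥ x₀))).re
          = Complex.normSq ((star (aVec N p) ⬝ᵥ x) - (star (aVec N p) ⬝ᵥ x₀)) := by
        intro p; rw [Complex.mul_conj, Complex.ofReal_re]
      rw [Finset.sum_congr rfl fun p _ => hl p] at h
      rw [h]
      have hrhs : ∀ n, ((x - x₀) n * (starRingEnd ℂ) ((x - x₀) n))
          = ((Complex.normSq ((x n) - (x₀ n)) : ℝ) : ℂ) := by
        intro n; rw [Pi.sub_apply, Complex.mul_conj]
      rw [Finset.sum_congr rfl fun n _ => hrhs n, ← Complex.ofReal_sum,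
        show (2 * (N : ℂ)) = ((2 * N : ℝ) : ℂ) by push_cast; ring,
        ← Complex.ofReal_mul, Complex.ofReal_re]
      have hreal : ∑ n, Complex.normSq ((x n) - (x₀ n))
          = 2 * (N : ℝ) - 2 * (∑ n, x n * (starRingEnd ℂ) (x₀ n)).re := by
        have hpt : ∀ n, Complex.normSq ((x n) - (x₀ n))
            = 2 - 2 * ((x n) * (starRingEnd ℂ) (x₀ n)).re := by
          intro n
          rw [Complex.normSq_sub]
          have e1 : Complex.normSq (x n) = 1 := by
            rw [← Complex.sq_norm, hx' n]; norm_num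
          have e2 : Complex.normSq (x₀ n) = 1 := by
            rw [← Complex.sq_norm, hx₀' n]; norm_num
          rw [e1, e2]; ring
        rw [Finset.sum_congr rfl fun n _ => hpt n, Finset.sum_sub_distrib, ← Finset.mul_sum,
          ← Complex.re_sum]
        simp only [Finset.sum_const, Finset.card_univ, Fintype.card_fin, nsmul_eq_mul]
        push_cast
        ring
      rw [hreal]
      ring
    -- ∑ r = 2N Re s
    have hsr : ∑ p : Fin (2 * N),
        ((star (aVec N p) ⬝ᵥ x₀) * (starRingEnd ℂ) (star (aVec N p) ⬝ᵥ x)).re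
        = 2 * (N : ℝ) * (∑ n, x n * (starRingEnd ℂ) (x₀ n)).re := by
      have h := congrArg Complex.re (sum_dot N hN x₀ x)
      rw [Complex.re_sum] at h
      rw [h]
      have hconj : (∑ n, x₀ n * (starRingEnd ℂ) (x n))
          = (starRingEnd ℂ) (∑ n, x n * (starRingEnd ℂ) (x₀ n)) := by
        rw [map_sum]
        exact Finset.sum_congr rfl fun n _ => by rw [_root_.map_mul, Complex.conj_conj]; ring
      rw [hconj, show (2 * (N : ℂ)) = ((2 * N : ℝ) : ℂ) by push_cast; ring,
        Complex.re_ofReal_mul, Complex.conj_re]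
    -- step B
    have hB : ∑ p : Fin (2 * N), pVec N x₀ p *
          (‖star (aVec N p) ⬝ᵥ x‖ ^ 2 + pVec N x₀ p
            - 2 * ((star (aVec N p) ⬝ᵥ x₀) * (starRingEnd ℂ) (star (aVec N p) ⬝ᵥ x)).re)
        ≤ pMax N x₀ * (4 * (N : ℝ) ^ 2
            - 4 * (N : ℝ) * (∑ n, x n * (starRingEnd ℂ) (x₀ n)).re) := by
      calc ∑ p : Fin (2 * N), pVec N x₀ p *
            (‖star (aVec N p) ⬝ᵥ x‖ ^ 2 + pVec N x₀ p
              - 2 * ((star (aVec N p) ⬝ᵥ x₀) * (starRingEnd ℂ) (star (aVec N p) ⬝ᵥ x)).re)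
          ≤ ∑ p : Fin (2 * N), pMax N x₀ *
            (‖star (aVec N p) ⬝ᵥ x‖ ^ 2 + pVec N x₀ p
              - 2 * ((star (aVec N p) ⬝ᵥ x₀) * (starRingEnd ℂ) (star (aVec N p) ⬝ᵥ x)).re) := by
            refine Finset.sum_le_sum fun p _ => ?_
            have h0 : 0 ≤ ‖star (aVec N p) ⬝ᵥ x‖ ^ 2 + pVec N x₀ p
                - 2 * ((star (aVec N p) ⬝ᵥ x₀) * (starRingEnd ℂ) (star (aVec N p) ⬝ᵥ x)).re := by
              rw [← hyz p]; exact Complex.normSq_nonneg _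
            exact mul_le_mul_of_nonneg_right (pVec_le_pMax N hN x₀ p) h0
        _ = pMax N x₀ * ∑ p : Fin (2 * N),
            (‖star (aVec N p) ⬝ᵥ x‖ ^ 2 + pVec N x₀ p
              - 2 * ((star (aVec N p) ⬝ᵥ x₀) * (starRingEnd ℂ) (star (aVec N p) ⬝ᵥ x)).re) := by
            rw [Finset.mul_sum]
        _ = _ := by rw [Finset.sum_congr rfl fun p _ => (hyz p).symm, hsumyz]
    -- expansions into atomic sums
    have e1 : ∑ p : Fin (2 * N),
        (‖star (aVec N p) ⬝ᵥ x‖ ^ 2 - pVec N x₀ p) ^ 2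
        = (∑ p : Fin (2 * N), (‖star (aVec N p) ⬝ᵥ x‖ ^ 2) ^ 2)
          - 2 * (∑ p : Fin (2 * N), pVec N x₀ p * ‖star (aVec N p) ⬝ᵥ x‖ ^ 2)
          + (∑ p : Fin (2 * N), pVec N x₀ p ^ 2) := by
      rw [Finset.sum_congr rfl fun p (_ : p ∈ Finset.univ) =>
        show (‖star (aVec N p) ⬝ᵥ x‖ ^ 2 - pVec N x₀ p) ^ 2
          = (‖star (aVec N p) ⬝ᵥ x‖ ^ 2) ^ 2
            - 2 * (pVec N x₀ p * ‖star (aVec N p) ⬝ᵥ x‖ ^ 2) + pVec N x₀ p ^ 2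
          by ring]
      rw [Finset.sum_add_distrib, Finset.sum_sub_distrib, ← Finset.mul_sum]
    have e2 : ∑ p : Fin (2 * N), pVec N x₀ p *
          (‖star (aVec N p) ⬝ᵥ x‖ ^ 2 + pVec N x₀ p
            - 2 * ((star (aVec N p) ⬝ᵥ x₀) * (starRingEnd ℂ) (star (aVec N p) ⬝ᵥ x)).re)
        = (∑ p : Fin (2 * N), pVec N x₀ p * ‖star (aVec N p) ⬝ᵥ x‖ ^ 2)
          + (∑ p : Fin (2 * N), pVec N x₀ p ^ 2)
          - 2 * (∑ p : Fin (2 * N), pVec N x₀ p *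
              ((star (aVec N p) ⬝ᵥ x₀) * (starRingEnd ℂ) (star (aVec N p) ⬝ᵥ x)).re) := by
      rw [Finset.sum_congr rfl fun p (_ : p ∈ Finset.univ) =>
        show pVec N x₀ p * (‖star (aVec N p) ⬝ᵥ x‖ ^ 2 + pVec N x₀ p
            - 2 * ((star (aVec N p) ⬝ᵥ x₀) * (starRingEnd ℂ) (star (aVec N p) ⬝ᵥ x)).re)
          = pVec N x₀ p * ‖star (aVec N p) ⬝ᵥ x‖ ^ 2 + pVec N x₀ p ^ 2
            - 2 * (pVec N x₀ p *
              ((star (aVec N p) ⬝ᵥ x₀) * (starRingEnd ℂ) (star (aVec N p) ⬝ᵥ x)).re)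
          by ring]
      rw [Finset.sum_sub_distrib, Finset.sum_add_distrib, ← Finset.mul_sum]
    have e3 : ∑ p : Fin (2 * N), (pVec N x₀ p - (pMax N x₀ + (N : ℝ) ^ 2)) *
          ((star (aVec N p) ⬝ᵥ x₀) * (starRingEnd ℂ) (star (aVec N p) ⬝ᵥ x)).re
        = (∑ p : Fin (2 * N), pVec N x₀ p *
            ((star (aVec N p) ⬝ᵥ x₀) * (starRingEnd ℂ) (star (aVec N p) ⬝ᵥ x)).re)
          - (pMax N x₀ + (N : ℝ) ^ 2)
            * (2 * (N : ℝ) * (∑ n, x n * (starRingEnd ℂ) (x₀ n)).re) := by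
      rw [Finset.sum_congr rfl fun p (_ : p ∈ Finset.univ) =>
        show (pVec N x₀ p - (pMax N x₀ + (N : ℝ) ^ 2)) *
            ((star (aVec N p) ⬝ᵥ x₀) * (starRingEnd ℂ) (star (aVec N p) ⬝ᵥ x)).re
          = pVec N x₀ p * ((star (aVec N p) ⬝ᵥ x₀) * (starRingEnd ℂ) (star (aVec N p) ⬝ᵥ x)).re
            - (pMax N x₀ + (N : ℝ) ^ 2) *
              ((star (aVec N p) ⬝ᵥ x₀) * (starRingEnd ℂ) (star (aVec N p) ⬝ᵥ x)).re
          by ring]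
      rw [Finset.sum_sub_distrib, ← hsr, Finset.mul_sum]
    have hns : Complex.normSq (∑ n, x n * (starRingEnd ℂ) (x₀ n))
        = (∑ n, x n * (starRingEnd ℂ) (x₀ n)).re ^ 2
          + (∑ n, x n * (starRingEnd ℂ) (x₀ n)).im ^ 2 := by
      rw [Complex.normSq_apply]; ring
    -- final assembly
    rw [uMaj_eq N x x₀, fObj]
    rw [Finset.sum_congr rfl fun p (_ : p ∈ Finset.univ) =>
      show ‖star (aVec N p) ⬝ᵥ x‖ ^ 4
        = (‖star (aVec N p) ⬝ᵥ x‖ ^ 2) ^ 2 by ring]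
    rw [Finset.sum_congr rfl fun p (_ : p ∈ Finset.univ) =>
      show ‖star (aVec N p) ⬝ᵥ x₀‖ ^ 4 = pVec N x₀ p ^ 2 by rw [pVec]; ring]
    rw [e3]
    rw [e1] at hA
    rw [e2] at hB
    nlinarith [hA, hB, hns,
      mul_nonneg (sq_nonneg ((N : ℝ)))
        (sq_nonneg ((∑ n, x n * (starRingEnd ℂ) (x₀ n)).re - (N : ℝ))),
      mul_nonneg (sq_nonneg ((N : ℝ))) (sq_nonneg ((∑ n, x n * (starRingEnd ℂ) (x₀ n)).im))]
  · rw [uMaj_eq N x₀ x₀, fObj]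
    have h1 : ∀ p : Fin (2 * N), (pVec N x₀ p - (pMax N x₀ + (N : ℝ) ^ 2))
        * ((star (aVec N p) ⬝ᵥ x₀) * (starRingEnd ℂ) (star (aVec N p) ⬝ᵥ x₀)).re
        = pVec N x₀ p ^ 2 - (pMax N x₀ + (N : ℝ) ^ 2) * pVec N x₀ p := by
      intro p; rw [hzz p]; ring
    rw [Finset.sum_congr rfl fun p _ => h1 p, Finset.sum_sub_distrib, ← Finset.mul_sum,
      sum_pVec N hN x₀ hx₀']
    rw [Finset.sum_congr rfl fun p (_ : p ∈ Finset.univ) =>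
      show ‖star (aVec N p) ⬝ᵥ x₀‖ ^ 4 = pVec N x₀ p ^ 2 by rw [pVec]; ring]
    ring
end
end
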